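/- arXiv:1101.2481 — 7 statements merged into one kernel-verified Lean document; each statement's English description precedes it below -/
import Mathlib

section
/- Let X ~ Poisson(λ) and Y ~ Poisson(ν) be independent random variables with λ ≥ ν > 0, and let Z = X − Y. Then Pr(Z ≤ 0) ≤ exp(−(√λ − √ν)²). -/
/-!
Chernoff's method with a multiplicative parameter `0 < t ≤ 1`: on the event `X ≤ Y` one has
`t ^ X * t⁻¹ ^ Y ≥ 1`, so by independence `Pr(X ≤ Y) ≤ E[t ^ X] * E[t⁻¹ ^ Y]`. The Poisson
generating functions give `E[s ^ X] = exp (λ (s - 1))`, and the choice `t = √(ν / λ)` turns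
`λ (t - 1) + ν (t⁻¹ - 1)` into `-(√λ - √ν) ^ 2`.
-/

open MeasureTheory ProbabilityTheory
open scoped ENNReal

theorem hasSum_poisson_mul_pow (lam s : ℝ) :
    HasSum (fun k : ℕ => Real.exp (-lam) * lam ^ k / k.factorial * s ^ k)
      (Real.exp (lam * (s - 1))) := by
  have hexp : HasSum (fun n : ℕ => (lam * s) ^ n / n.factorial) (Real.exp (lam * s)) :=
    Real.exp_eq_exp_ℝ ▸ NormedSpace.expSeries_div_hasSum_exp (lam * s)
  rw [show lam * (s - 1) = -lam + lam * s by ring, Real.exp_add]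
  simpa only [mul_pow, mul_div_assoc, div_mul_eq_mul_div, mul_assoc, mul_comm (s ^ _)] using
    hexp.mul_left (Real.exp (-lam))

theorem tsum_ofReal_poisson_mul_ofReal_pow {lam s : ℝ} (hlam : 0 ≤ lam) (hs : 0 ≤ s) :
    ∑' k : ℕ, ENNReal.ofReal (Real.exp (-lam) * lam ^ k / k.factorial) * ENNReal.ofReal (s ^ k)
      = ENNReal.ofReal (Real.exp (lam * (s - 1))) := by
  have h := hasSum_poisson_mul_pow lam s
  calc _ = ∑' k : ℕ, ENNReal.ofReal (Real.exp (-lam) * lam ^ k / k.factorial * s ^ k) :=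
        tsum_congr fun k => (ENNReal.ofReal_mul (by positivity)).symm
    _ = _ := by
        rw [← ENNReal.ofReal_tsum_of_nonneg (fun k => by positivity) h.summable, h.tsum_eq]

theorem measure_preimage_le_tsum_mul {Ω α : Type*} [MeasurableSpace Ω] [Countable α]
    (μ : Measure Ω) (f : Ω → α) {s : Set α} {w : α → ℝ≥0∞} (hw : ∀ a ∈ s, 1 ≤ w a) :
    μ (f ⁻¹' s) ≤ ∑' a, μ (f ⁻¹' {a}) * w a :=
  calc μ (f ⁻¹' s) = μ (⋃ a ∈ s, f ⁻¹' {a}) := by rw [Set.biUnion_preimage_singleton]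
    _ ≤ ∑' a : s, μ (f ⁻¹' {(a : α)}) := measure_biUnion_le μ s.to_countable _
    _ ≤ ∑' a : s, μ (f ⁻¹' {(a : α)}) * w a :=
        ENNReal.tsum_le_tsum fun a => le_mul_of_one_le_right' (hw a a.2)
    _ ≤ ∑' a, μ (f ⁻¹' {a}) * w a :=
        ENNReal.tsum_comp_le_tsum_of_injective Subtype.val_injective _

theorem one_le_pow_mul_inv_pow {t : ℝ} (ht0 : 0 < t) (ht1 : t ≤ 1) {j k : ℕ} (hjk : j ≤ k) :
    1 ≤ t ^ j * t⁻¹ ^ k := by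
  rw [inv_pow, ← div_eq_mul_inv, one_le_div (pow_pos ht0 k)]
  exact pow_le_pow_of_le_one ht0.le ht1 hjk

theorem ProbabilityTheory.IndepFun.measure_setOf_le_le_tsum_mul_tsum {Ω : Type*}
    [MeasurableSpace Ω] {μ : Measure Ω} {X Y : Ω → ℕ} (hXY : IndepFun X Y μ) {t : ℝ}
    (ht0 : 0 < t) (ht1 : t ≤ 1) :
    μ {ω | X ω ≤ Y ω} ≤ (∑' j, μ {ω | X ω = j} * ENNReal.ofReal (t ^ j)) *
      ∑' k, μ {ω | Y ω = k} * ENNReal.ofReal (t⁻¹ ^ k) := by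
  have hprod (j k : ℕ) :
      μ ((fun ω => (X ω, Y ω)) ⁻¹' {(j, k)}) = μ {ω | X ω = j} * μ {ω | Y ω = k} := by
    rw [← Set.singleton_prod_singleton, Set.mk_preimage_prod]
    exact hXY.measure_inter_preimage_eq_mul _ _ (measurableSet_singleton j)
      (measurableSet_singleton k)
  calc μ {ω | X ω ≤ Y ω} = μ ((fun ω => (X ω, Y ω)) ⁻¹' {p | p.1 ≤ p.2}) := rfl
    _ ≤ ∑' p : ℕ × ℕ, μ ((fun ω => (X ω, Y ω)) ⁻¹' {p}) *
          (ENNReal.ofReal (t ^ p.1) * ENNReal.ofReal (t⁻¹ ^ p.2)) :=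
        measure_preimage_le_tsum_mul μ _ fun p hp => by
          rw [← ENNReal.ofReal_mul (by positivity), ← ENNReal.ofReal_one]
          exact ENNReal.ofReal_le_ofReal (one_le_pow_mul_inv_pow ht0 ht1 hp)
    _ = _ := by
        simp_rw [ENNReal.tsum_prod', hprod, mul_mul_mul_comm, ENNReal.tsum_mul_left,
          ENNReal.tsum_mul_right]

theorem skellam_chernoff_bound_general
    {Ω : Type*} [MeasurableSpace Ω] (P : Measure Ω)
    (X Y : Ω → ℕ) (lam nu : ℝ) (hnu : 0 < nu) (hle : nu ≤ lam)
    (hX : ∀ k : ℕ, P {ω | X ω = k} =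
      ENNReal.ofReal (Real.exp (-lam) * lam ^ k / (Nat.factorial k)))
    (hY : ∀ k : ℕ, P {ω | Y ω = k} =
      ENNReal.ofReal (Real.exp (-nu) * nu ^ k / (Nat.factorial k)))
    (hindep : IndepFun X Y P) :
    P {ω | (X ω : ℤ) - (Y ω : ℤ) ≤ 0} ≤
      ENNReal.ofReal (Real.exp (-(Real.sqrt lam - Real.sqrt nu) ^ 2)) := by
  have hlam : 0 < lam := hnu.trans_le hle
  have hsl : 0 < √lam := Real.sqrt_pos.2 hlam
  have hsn : 0 < √nu := Real.sqrt_pos.2 hnu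
  -- `t` minimises `lam * (t - 1) + nu * (t⁻¹ - 1)` over `t > 0`
  set t := √nu / √lam with ht
  have ht0 : 0 < t := div_pos hsn hsl
  have ht1 : t ≤ 1 := (div_le_one hsl).2 (Real.sqrt_le_sqrt hle)
  have hevent : {ω | (X ω : ℤ) - (Y ω : ℤ) ≤ 0} = {ω | X ω ≤ Y ω} := by
    ext ω; simp only [Set.mem_ofPred_eq, sub_nonpos, Nat.cast_le]
  have hexponent : lam * (t - 1) + nu * (t⁻¹ - 1) = -(√lam - √nu) ^ 2 := by
    rw [ht, inv_div]
    field_simp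
    linear_combination (√nu * (√lam - √nu)) * Real.sq_sqrt hlam.le +
      (√lam * (√nu - √lam)) * Real.sq_sqrt hnu.le
  calc P {ω | (X ω : ℤ) - (Y ω : ℤ) ≤ 0}
      ≤ (∑' j, P {ω | X ω = j} * ENNReal.ofReal (t ^ j)) *
          ∑' k, P {ω | Y ω = k} * ENNReal.ofReal (t⁻¹ ^ k) :=
        hevent ▸ hindep.measure_setOf_le_le_tsum_mul_tsum ht0 ht1
    _ = ENNReal.ofReal (Real.exp (lam * (t - 1))) *
          ENNReal.ofReal (Real.exp (nu * (t⁻¹ - 1))) := by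
        simp_rw [hX, hY, tsum_ofReal_poisson_mul_ofReal_pow hlam.le ht0.le,
          tsum_ofReal_poisson_mul_ofReal_pow hnu.le (inv_nonneg.2 ht0.le)]
    _ = ENNReal.ofReal (Real.exp (-(√lam - √nu) ^ 2)) := by
        rw [← ENNReal.ofReal_mul (Real.exp_nonneg _), ← Real.exp_add, hexponent]

/-- **Skellam Chernoff bound.** If `X ~ Poisson(lam)` and `Y ~ Poisson(nu)` are independent
with `lam ≥ nu > 0`, and `Z = X - Y`, then `Pr(Z ≤ 0) ≤ exp(-(√lam - √nu)²)`. -/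
theorem skellam_chernoff_bound
    {Ω : Type*} [MeasurableSpace Ω] (P : Measure Ω) [IsProbabilityMeasure P]
    (X Y : Ω → ℕ) (lam nu : ℝ) (hnu : 0 < nu) (hle : nu ≤ lam)
    (hX : ∀ k : ℕ, P {ω | X ω = k} =
      ENNReal.ofReal (Real.exp (-lam) * lam ^ k / (Nat.factorial k)))
    (hY : ∀ k : ℕ, P {ω | Y ω = k} =
      ENNReal.ofReal (Real.exp (-nu) * nu ^ k / (Nat.factorial k)))
    (hindep : IndepFun X Y P) :
    P {ω | (X ω : ℤ) - (Y ω : ℤ) ≤ 0} ≤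
      ENNReal.ofReal (Real.exp (-(Real.sqrt lam - Real.sqrt nu) ^ 2)) :=
  skellam_chernoff_bound_general P X Y lam nu hnu hle hX hY hindep
end

section
/- Let X_1, …, X_n be independent random variables with X_i ~ Poisson(λ_i), where λ_1 ≥ λ_2 ≥ … ≥ λ_n > 0 and n ≥ 2. Then Pr(X_1 > X_2 > … > X_n) ≥ 1 − Σ_{i=1}^{n−1} exp(−(√λ_i − √λ_{i+1})²). -/
/-!
For a single pair `Y ~ Poisson(a)`, `Z ~ Poisson(b)` with `b ≤ a`, put `s = √(ab)`. For `k ≤ j`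
we have `a ^ k * b ^ j = (ab) ^ k * b ^ (j - k) ≤ s ^ (k + j)`, so
`Pr(Y ≤ Z) = ∑_{k ≤ j} Pr(Y = k) Pr(Z = j) ≤ e^{-a-b} ∑_{k, j} s^k / k! * s^j / j! = e^{-a-b+2s}`,
and `-a - b + 2s = -(√a - √b)²`. The theorem follows by a union bound over the `n - 1` events
`X_i ≤ X_{i+1}`.
-/

open MeasureTheory ProbabilityTheory

section Poisson

variable {Ω : Type*} [MeasurableSpace Ω]

def HasPoissonLaw (P : Measure Ω) (Y : Ω → ℕ) (r : ℝ) : Prop :=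
  ∀ k : ℕ, P {ω | Y ω = k} = ENNReal.ofReal (Real.exp (-r) * r ^ k / k.factorial)

lemma pow_mul_pow_le_sqrt_mul_pow {a b : ℝ} (hb : 0 ≤ b) (hba : b ≤ a) {k j : ℕ} (hkj : k ≤ j) :
    a ^ k * b ^ j ≤ √(a * b) ^ k * √(a * b) ^ j := by
  have hab : 0 ≤ a * b := mul_nonneg (hb.trans hba) hb
  have hbs : b ≤ √(a * b) := Real.le_sqrt_of_sq_le (by nlinarith)
  obtain ⟨m, rfl⟩ := Nat.exists_eq_add_of_le hkj
  calc a ^ k * b ^ (k + m) = (a * b) ^ k * b ^ m := by ring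
    _ ≤ (a * b) ^ k * √(a * b) ^ m := by gcongr
    _ = √(a * b) ^ k * √(a * b) ^ (k + m) := by
        rw [pow_add, ← mul_assoc, ← mul_pow, Real.mul_self_sqrt hab]

lemma tsum_ofReal_pow_div_factorial {s : ℝ} (hs : 0 ≤ s) :
    ∑' k : ℕ, ENNReal.ofReal (s ^ k / k.factorial) = ENNReal.ofReal (Real.exp s) := by
  rw [← ENNReal.ofReal_tsum_of_nonneg (fun k => by positivity) (Real.summable_pow_div_factorial s),
    Real.exp_eq_exp_ℝ, NormedSpace.exp_eq_tsum_div]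

lemma exp_neg_sq_sqrt_sub_sqrt {a b : ℝ} (ha : 0 ≤ a) (hb : 0 ≤ b) :
    Real.exp (-(√a - √b) ^ 2) = Real.exp (-a - b) * Real.exp √(a * b) * Real.exp √(a * b) := by
  rw [← Real.exp_add, ← Real.exp_add, Real.sqrt_mul ha]
  congr 1
  nlinarith [Real.sq_sqrt ha, Real.sq_sqrt hb]

theorem HasPoissonLaw.measure_le_le_exp {P : Measure Ω} {Y Z : Ω → ℕ} {a b : ℝ}
    (hY : HasPoissonLaw P Y a) (hZ : HasPoissonLaw P Z b) (hind : IndepFun Y Z P)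
    (hb : 0 ≤ b) (hba : b ≤ a) :
    P {ω | Y ω ≤ Z ω} ≤ ENNReal.ofReal (Real.exp (-(√a - √b) ^ 2)) := by
  have ha : 0 ≤ a := hb.trans hba
  set s := √(a * b)
  have hs : 0 ≤ s := Real.sqrt_nonneg _
  set w : ℕ → ℕ → ENNReal := fun k j =>
    ENNReal.ofReal (Real.exp (-a - b)) * ENNReal.ofReal (s ^ k / k.factorial) *
      ENNReal.ofReal (s ^ j / j.factorial)
  have hcover : {ω | Y ω ≤ Z ω} ⊆ ⋃ p : ℕ × ℕ, {ω | Y ω = p.1 ∧ Z ω = p.2 ∧ p.1 ≤ p.2} :=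
    fun ω hω => Set.mem_iUnion.2 ⟨(Y ω, Z ω), rfl, rfl, hω⟩
  have hterm (p : ℕ × ℕ) : P {ω | Y ω = p.1 ∧ Z ω = p.2 ∧ p.1 ≤ p.2} ≤ w p.1 p.2 := by
    obtain ⟨k, j⟩ := p
    by_cases hkj : k ≤ j
    · have hind' : P {ω | Y ω = k ∧ Z ω = j} = P {ω | Y ω = k} * P {ω | Z ω = j} :=
        hind.measure_inter_preimage_eq_mul _ _ (measurableSet_singleton k)
          (measurableSet_singleton j)
      simp only [hkj, and_true, hind', hY k, hZ j, w]
      rw [← ENNReal.ofReal_mul (by positivity), ← ENNReal.ofReal_mul (by positivity),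
        ← ENNReal.ofReal_mul (by positivity)]
      refine ENNReal.ofReal_le_ofReal ?_
      have hpow := pow_mul_pow_le_sqrt_mul_pow hb hba hkj
      calc Real.exp (-a) * a ^ k / k.factorial * (Real.exp (-b) * b ^ j / j.factorial)
          = Real.exp (-a - b) * (a ^ k * b ^ j) / (k.factorial * j.factorial) := by
            rw [sub_eq_add_neg, Real.exp_add]; ring
        _ ≤ Real.exp (-a - b) * (s ^ k * s ^ j) / (k.factorial * j.factorial) := by gcongr
        _ = _ := by ring
    · simp [hkj]
  calc P {ω | Y ω ≤ Z ω} ≤ ∑' p : ℕ × ℕ, w p.1 p.2 :=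
        (measure_mono hcover).trans ((measure_iUnion_le _).trans (ENNReal.tsum_le_tsum hterm))
    _ = ENNReal.ofReal (Real.exp (-(√a - √b) ^ 2)) := by
        rw [ENNReal.tsum_prod]
        simp only [w, ENNReal.tsum_mul_left, ENNReal.tsum_mul_right,
          tsum_ofReal_pow_div_factorial hs]
        rw [exp_neg_sq_sqrt_sub_sqrt ha hb, ENNReal.ofReal_mul (by positivity),
          ENNReal.ofReal_mul (by positivity), mul_assoc]

end Poisson

lemma one_sub_sum_measure_compl_le_measure_biInter {Ω ι : Type*} [MeasurableSpace Ω]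
    (P : Measure Ω) [IsProbabilityMeasure P] (s : Finset ι) (A : ι → Set Ω) :
    1 - ∑ i ∈ s, P (A i)ᶜ ≤ P (⋂ i ∈ s, A i) := by
  have hcover : Set.univ ⊆ (⋂ i ∈ s, A i) ∪ ⋃ i ∈ s, (A i)ᶜ :=
    fun ω _ => or_iff_not_imp_left.2 fun h => by simpa using h
  refine tsub_le_iff_right.2 ?_
  calc (1 : ENNReal) = P Set.univ := measure_univ.symm
    _ ≤ P ((⋂ i ∈ s, A i) ∪ ⋃ i ∈ s, (A i)ᶜ) := measure_mono hcover
    _ ≤ P (⋂ i ∈ s, A i) + ∑ i ∈ s, P (A i)ᶜ :=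
        (measure_union_le _ _).trans (add_le_add_right (measure_biUnion_finset_le _ _) _)

theorem prob_correct_order_ge_general
    {Ω : Type*} [MeasurableSpace Ω] (P : Measure Ω) [IsProbabilityMeasure P]
    (n : ℕ) (X : ℕ → Ω → ℕ) (lam : ℕ → ℝ)
    (hpos : 0 < lam n)
    (hmono : ∀ i : ℕ, 1 ≤ i → i < n → lam (i + 1) ≤ lam i)
    (hdist : ∀ i : ℕ, 1 ≤ i → i ≤ n → ∀ k : ℕ,
      P {ω | X i ω = k} =
        ENNReal.ofReal (Real.exp (-lam i) * lam i ^ k / (Nat.factorial k)))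
    (hindep : iIndepFun
      (fun i : Finset.Icc 1 n => X i) P) :
    ENNReal.ofReal
        (1 - ∑ i ∈ Finset.Ico 1 n,
          Real.exp (-(Real.sqrt (lam i) - Real.sqrt (lam (i + 1))) ^ 2))
      ≤ P {ω | ∀ i : ℕ, 1 ≤ i → i < n → X (i + 1) ω < X i ω} := by
  have hlam_nonneg {i : ℕ} (hi : 1 ≤ i) (hin : i ≤ n) : 0 ≤ lam i :=
    hpos.le.trans <| Nat.decreasingInduction' (P := fun k => lam n ≤ lam k)
      (fun k hkn hik h => h.trans (hmono k (hi.trans hik) hkn)) hin le_rfl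
  have hpair {i : ℕ} (hi : i ∈ Finset.Ico 1 n) : P {ω | X i ω ≤ X (i + 1) ω} ≤
      ENNReal.ofReal (Real.exp (-(Real.sqrt (lam i) - Real.sqrt (lam (i + 1))) ^ 2)) := by
    obtain ⟨h1, h2⟩ := Finset.mem_Ico.1 hi
    have hne : (⟨i, by simp; omega⟩ : Finset.Icc 1 n) ≠ ⟨i + 1, by simp; omega⟩ := by simp
    exact HasPoissonLaw.measure_le_le_exp (hdist i h1 h2.le) (hdist (i + 1) (by omega) h2)
      (hindep.indepFun hne) (hlam_nonneg (by omega) h2) (hmono i h1 h2)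
  have hgood : {ω | ∀ i : ℕ, 1 ≤ i → i < n → X (i + 1) ω < X i ω} =
      ⋂ i ∈ Finset.Ico 1 n, {ω | X (i + 1) ω < X i ω} := by
    ext ω; simp
  rw [hgood, ENNReal.ofReal_sub _ (Finset.sum_nonneg fun i _ => (Real.exp_pos _).le),
    ENNReal.ofReal_one, ENNReal.ofReal_sum_of_nonneg fun i _ => (Real.exp_pos _).le]
  refine le_trans (tsub_le_tsub_left (Finset.sum_le_sum fun i hi => ?_) 1)
    (one_sub_sum_measure_compl_le_measure_biInter P _ _)
  simpa [Set.compl_ofPred, not_lt] using hpair hi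

/-- If `X₁, …, Xₙ` are independent with `Xᵢ ~ Poisson(λᵢ)`, `λ₁ ≥ λ₂ ≥ … ≥ λₙ > 0`
and `n ≥ 2`, then
`Pr(X₁ > X₂ > … > Xₙ) ≥ 1 - ∑_{i=1}^{n-1} exp(-(√λᵢ - √λ_{i+1})²)`. -/
theorem prob_correct_order_ge
    {Ω : Type*} [MeasurableSpace Ω] (P : Measure Ω) [IsProbabilityMeasure P]
    (n : ℕ) (hn : 2 ≤ n) (X : ℕ → Ω → ℕ) (lam : ℕ → ℝ)
    (hpos : 0 < lam n)
    (hmono : ∀ i : ℕ, 1 ≤ i → i < n → lam (i + 1) ≤ lam i)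
    (hdist : ∀ i : ℕ, 1 ≤ i → i ≤ n → ∀ k : ℕ,
      P {ω | X i ω = k} =
        ENNReal.ofReal (Real.exp (-lam i) * lam i ^ k / (Nat.factorial k)))
    (hindep : iIndepFun
      (fun i : Finset.Icc 1 n => X i) P) :
    ENNReal.ofReal
        (1 - ∑ i ∈ Finset.Ico 1 n,
          Real.exp (-(Real.sqrt (lam i) - Real.sqrt (lam (i + 1))) ^ 2))
      ≤ P {ω | ∀ i : ℕ, 1 ≤ i → i < n → X (i + 1) ω < X i ω} :=
  prob_correct_order_ge_general P n X lam hpos hmono hdist hindep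
end

section
/- Let X_i, i ≥ 1, be sampled from the Zipf–Poisson ensemble with parameters α > 1 and N > 0. Then for every integer n ≥ 2, Pr(X_1 > X_2 > … > X_n) ≥ 1 − n·exp(−(N α² / 4) · n^{−α−2}). -/
/-!
For `1 ≤ i < n` the variables `X i ~ Poisson(a)` and `X (i + 1) ~ Poisson(b)`, `b ≤ a`, are
independent, and a Chernoff bound by exponential tilting gives
`Pr(X i ≤ X (i + 1)) ≤ exp(-(√a - √b)²)`. By the mean value theorem for `t ↦ t ^ (-α / 2)`,
`√a - √b ≥ √N (α / 2) n ^ (-α / 2 - 1)`, so each of the `n - 1` failures of `X (i + 1) < X i` has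
probability at most `exp(-(N α² / 4) n ^ (-α - 2))`; a union bound finishes the proof.
-/

open MeasureTheory ProbabilityTheory

/-- The Zipf–Poisson ensemble with parameters `α > 1`, `N > 0`: the random variables
`X i`, for integers `i ≥ 1`, are independent and `X i ~ Poisson(N * i^(-α))`. -/
def IsZipfPoisson {Ω : Type*} [MeasurableSpace Ω] (P : Measure Ω)
    (X : ℕ → Ω → ℕ) (α N : ℝ) : Prop :=
  iIndepFun (fun i : {i : ℕ // 1 ≤ i} => X i) P ∧
  ∀ i : ℕ, 1 ≤ i → ∀ k : ℕ,
    P {ω | X i ω = k} =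
      ENNReal.ofReal (Real.exp (-(N * (i : ℝ) ^ (-α))) * (N * (i : ℝ) ^ (-α)) ^ k /
        (Nat.factorial k))

open Real Nat

lemma tsum_ofReal_exp_neg_mul_pow_div_factorial (a : ℝ) {t : ℝ} (ht : 0 ≤ t) :
    ∑' k : ℕ, ENNReal.ofReal (exp (-a) * t ^ k / k !) = ENNReal.ofReal (exp (t - a)) := by
  have hsum : HasSum (fun k : ℕ ↦ exp (-a) * t ^ k / k !) (exp (t - a)) := by
    simpa only [mul_div_assoc, ← Real.exp_eq_exp_ℝ, ← Real.exp_add, neg_add_eq_sub] using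
      (NormedSpace.expSeries_div_hasSum_exp t).mul_left (exp (-a))
  rw [← ENNReal.ofReal_tsum_of_nonneg (fun k ↦ by positivity) hsum.summable, hsum.tsum_eq]

lemma pow_mul_pow_le_div_pow_mul_mul_pow {a b s : ℝ} (ha : 0 ≤ a) (hb : 0 ≤ b) (hs : 1 ≤ s)
    {k l : ℕ} (hkl : k ≤ l) : a ^ k * b ^ l ≤ (a / s) ^ k * (b * s) ^ l := by
  obtain ⟨m, rfl⟩ := Nat.exists_eq_add_of_le hkl
  have hs0 : s ≠ 0 := by positivity
  calc a ^ k * b ^ (k + m) ≤ a ^ k * b ^ (k + m) * s ^ m :=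
        le_mul_of_one_le_right (by positivity) (one_le_pow₀ hs)
    _ = (a / s) ^ k * (b * s) ^ (k + m) := by
        rw [div_pow, mul_pow, pow_add, pow_add]
        field_simp

/-- Exponential tilting by `s = √(a / b)`: on `{k ≤ l}` the joint Poisson weights are dominated
by Poisson weights at the rates `a / s` and `b * s`, both equal to `√(a b)`. -/
lemma measure_le_le_exp_neg_sq_sqrt_sub_sqrt {Ω : Type*} [MeasurableSpace Ω] {P : Measure Ω}
    {X Y : Ω → ℕ} {a b : ℝ} (hb : 0 < b) (hba : b ≤ a)
    (hX : ∀ k, P (X ⁻¹' {k}) = ENNReal.ofReal (exp (-a) * a ^ k / k !))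
    (hY : ∀ l, P (Y ⁻¹' {l}) = ENNReal.ofReal (exp (-b) * b ^ l / l !))
    (hXY : IndepFun X Y P) :
    P {ω | X ω ≤ Y ω} ≤ ENNReal.ofReal (exp (-(√a - √b) ^ 2)) := by
  have ha : 0 < a := hb.trans_le hba
  set s := √a / √b with hs_def
  have hs : 1 ≤ s := (one_le_div (sqrt_pos.2 hb)).2 (sqrt_le_sqrt hba)
  have has : a / s = √a * √b := by
    rw [hs_def]
    field_simp
    exact (sq_sqrt ha.le).symm
  have hbs : b * s = √a * √b := by
    rw [hs_def]
    field_simp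
    exact (sq_sqrt hb.le).symm
  set w : ℕ × ℕ → ENNReal := fun p ↦ ENNReal.ofReal (exp (-a) * (a / s) ^ p.1 / p.1 !) *
    ENNReal.ofReal (exp (-b) * (b * s) ^ p.2 / p.2 !)
  have hcover : {ω | X ω ≤ Y ω} ⊆
      ⋃ p : {p : ℕ × ℕ // p.1 ≤ p.2}, X ⁻¹' {p.1.1} ∩ Y ⁻¹' {p.1.2} :=
    fun ω hω ↦ Set.mem_iUnion.2 ⟨⟨(X ω, Y ω), hω⟩, rfl, rfl⟩
  have hpoint : ∀ p : {p : ℕ × ℕ // p.1 ≤ p.2},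
      P (X ⁻¹' {p.1.1} ∩ Y ⁻¹' {p.1.2}) ≤ w p := by
    rintro ⟨⟨k, l⟩, hkl⟩
    simp only [w]
    rw [hXY.measure_inter_preimage_eq_mul _ _ (measurableSet_singleton k)
        (measurableSet_singleton l), hX, hY, ← ENNReal.ofReal_mul (by positivity),
      ← ENNReal.ofReal_mul (by positivity)]
    refine ENNReal.ofReal_le_ofReal ?_
    calc _ = exp (-a) * exp (-b) / (k ! * l !) * (a ^ k * b ^ l) := by ring
      _ ≤ exp (-a) * exp (-b) / (k ! * l !) * ((a / s) ^ k * (b * s) ^ l) :=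
          mul_le_mul_of_nonneg_left (pow_mul_pow_le_div_pow_mul_mul_pow ha.le hb.le hs hkl)
            (by positivity)
      _ = _ := by ring
  calc P {ω | X ω ≤ Y ω} ≤ ∑' p : {p : ℕ × ℕ // p.1 ≤ p.2}, w p :=
        (measure_mono hcover).trans ((measure_iUnion_le _).trans (ENNReal.tsum_le_tsum hpoint))
    _ ≤ ∑' p, w p := ENNReal.tsum_comp_le_tsum_of_injective Subtype.val_injective w
    _ = ENNReal.ofReal (exp (√a * √b - a)) * ENNReal.ofReal (exp (√a * √b - b)) := by
        simp only [w, ENNReal.tsum_prod', ENNReal.tsum_mul_left, ENNReal.tsum_mul_right]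
        rw [tsum_ofReal_exp_neg_mul_pow_div_factorial a (by positivity),
          tsum_ofReal_exp_neg_mul_pow_div_factorial b (by positivity), has, hbs]
    _ = ENNReal.ofReal (exp (-(√a - √b) ^ 2)) := by
        rw [← ENNReal.ofReal_mul (exp_nonneg _), ← exp_add]
        congr 2
        nlinarith [sq_sqrt ha.le, sq_sqrt hb.le]

lemma mul_rpow_neg_sub_one_le_rpow_neg_sub_rpow_neg {β x y : ℝ} (hβ : 0 ≤ β) (hx : 0 < x)
    (hxy : x + 1 ≤ y) : β * y ^ (-β - 1) ≤ x ^ (-β) - (x + 1) ^ (-β) := by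
  obtain ⟨c, hc, hslope⟩ := exists_hasDerivAt_eq_slope (fun t : ℝ ↦ t ^ (-β))
    (fun t ↦ -β * t ^ (-β - 1)) (lt_add_one x)
    (fun t ht ↦
      (continuousAt_rpow_const t (-β) (Or.inl (hx.trans_le ht.1).ne')).continuousWithinAt)
    (fun t ht ↦ hasDerivAt_rpow_const (Or.inl (hx.trans ht.1).ne'))
  rw [add_sub_cancel_left, div_one] at hslope
  have hc : y ^ (-β - 1) ≤ c ^ (-β - 1) :=
    rpow_le_rpow_of_nonpos (hx.trans hc.1) (by linarith [hc.2]) (by linarith)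
  calc β * y ^ (-β - 1) ≤ β * c ^ (-β - 1) := mul_le_mul_of_nonneg_left hc hβ
    _ = x ^ (-β) - (x + 1) ^ (-β) := by linarith

lemma sqrt_mul_rpow_neg (N : ℝ) {x : ℝ} (hx : 0 ≤ x) (α : ℝ) :
    √(N * x ^ (-α)) = √N * x ^ (-(α / 2)) := by
  rw [sqrt_mul' N (rpow_nonneg hx _), sqrt_eq_rpow (x ^ (-α)), ← rpow_mul hx]
  ring_nf

lemma mul_sq_div_four_mul_rpow_le_sq_sqrt_sub_sqrt {N α x y : ℝ} (hN : 0 ≤ N) (hα : 0 ≤ α)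
    (hx : 0 < x) (hxy : x + 1 ≤ y) :
    N * α ^ 2 / 4 * y ^ (-α - 2) ≤ (√(N * x ^ (-α)) - √(N * (x + 1) ^ (-α))) ^ 2 := by
  have hy : 0 < y := by linarith
  have hgap := mul_rpow_neg_sub_one_le_rpow_neg_sub_rpow_neg (by linarith : 0 ≤ α / 2) hx hxy
  calc N * α ^ 2 / 4 * y ^ (-α - 2) = (√N * (α / 2 * y ^ (-(α / 2) - 1))) ^ 2 := by
        rw [mul_pow, sq_sqrt hN, mul_pow, ← rpow_mul_natCast hy.le]
        ring_nf
    _ ≤ (√N * (x ^ (-(α / 2)) - (x + 1) ^ (-(α / 2)))) ^ 2 := by gcongr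
    _ = (√(N * x ^ (-α)) - √(N * (x + 1) ^ (-α))) ^ 2 := by
        rw [sqrt_mul_rpow_neg N hx.le, sqrt_mul_rpow_neg N (by linarith), mul_sub]

lemma ofReal_one_sub_le_of_measure_compl_le {Ω : Type*} [MeasurableSpace Ω] {P : Measure Ω}
    [IsProbabilityMeasure P] {E : Set Ω} {r : ℝ} (hr : 0 ≤ r) (h : P Eᶜ ≤ ENNReal.ofReal r) :
    ENNReal.ofReal (1 - r) ≤ P E :=
  calc ENNReal.ofReal (1 - r) = 1 - ENNReal.ofReal r := by
        rw [ENNReal.ofReal_sub _ hr, ENNReal.ofReal_one]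
    _ ≤ 1 - P Eᶜ := tsub_le_tsub_left h 1
    _ ≤ P E := tsub_le_iff_right.2 (by simpa using measure_univ_le_add_compl (μ := P) E)

namespace IsZipfPoisson

variable {Ω : Type*} [MeasurableSpace Ω] {P : Measure Ω} {X : ℕ → Ω → ℕ} {α N : ℝ}

lemma indepFun_succ (hzp : IsZipfPoisson P X α N) {i : ℕ} (hi : 1 ≤ i) :
    IndepFun (X i) (X (i + 1)) P :=
  hzp.1.indepFun (i := ⟨i, hi⟩) (j := ⟨i + 1, by omega⟩) (by simp [Subtype.ext_iff])

lemma measure_le_succ_le (hzp : IsZipfPoisson P X α N) (hα : 0 ≤ α) (hN : 0 < N) {i n : ℕ}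
    (hi : 1 ≤ i) (hin : i < n) :
    P {ω | X i ω ≤ X (i + 1) ω} ≤ ENNReal.ofReal (exp (-(N * α ^ 2 / 4) * n ^ (-α - 2))) := by
  have hi0 : (0 : ℝ) < i := by exact_mod_cast hi
  have hin' : (i : ℝ) + 1 ≤ n := by exact_mod_cast hin
  refine (measure_le_le_exp_neg_sq_sqrt_sub_sqrt (a := N * (i : ℝ) ^ (-α))
    (b := N * ((i : ℝ) + 1) ^ (-α)) (by positivity) ?_ (hzp.2 i hi) ?_
    (hzp.indepFun_succ hi)).trans ?_
  · exact mul_le_mul_of_nonneg_left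
      (rpow_le_rpow_of_nonpos hi0 (by linarith) (by linarith)) hN.le
  · exact_mod_cast hzp.2 (i + 1) (by omega)
  · gcongr
    rw [neg_mul]
    exact neg_le_neg (mul_sq_div_four_mul_rpow_le_sq_sqrt_sub_sqrt hN.le hα hi0 hin')

end IsZipfPoisson

theorem zipf_poisson_order_bound_general
    {Ω : Type*} [MeasurableSpace Ω] (P : Measure Ω) [IsProbabilityMeasure P]
    (X : ℕ → Ω → ℕ) (α N : ℝ) (hα : 1 < α) (hN : 0 < N)
    (hzp : IsZipfPoisson P X α N) (n : ℕ) :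
    ENNReal.ofReal
        (1 - n * Real.exp (-(N * α ^ 2 / 4) * (n : ℝ) ^ (-α - 2)))
      ≤ P {ω | ∀ i : ℕ, 1 ≤ i → i < n → X (i + 1) ω < X i ω} := by
  set e := Real.exp (-(N * α ^ 2 / 4) * (n : ℝ) ^ (-α - 2))
  have hcover : {ω | ∀ i : ℕ, 1 ≤ i → i < n → X (i + 1) ω < X i ω}ᶜ ⊆
      ⋃ i ∈ Finset.Ico 1 n, {ω | X i ω ≤ X (i + 1) ω} := by
    intro ω hω
    obtain ⟨i, hi, hin, hle⟩ : ∃ i, 1 ≤ i ∧ i < n ∧ X i ω ≤ X (i + 1) ω := by simpa using hω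
    exact Set.mem_biUnion (Finset.mem_Ico.2 ⟨hi, hin⟩) hle
  refine ofReal_one_sub_le_of_measure_compl_le (by positivity) ?_
  calc _ ≤ ∑ i ∈ Finset.Ico 1 n, P {ω | X i ω ≤ X (i + 1) ω} :=
        (measure_mono hcover).trans (measure_biUnion_finset_le _ _)
    _ ≤ ∑ i ∈ Finset.Ico 1 n, ENNReal.ofReal e := Finset.sum_le_sum fun i hi ↦
        hzp.measure_le_succ_le (by linarith) hN (Finset.mem_Ico.1 hi).1 (Finset.mem_Ico.1 hi).2
    _ ≤ ENNReal.ofReal (n * e) := by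
        rw [Finset.sum_const, Nat.card_Ico, nsmul_eq_mul, ENNReal.ofReal_mul (by positivity),
          ENNReal.ofReal_natCast]
        gcongr
        exact Nat.sub_le n 1

/-- For the Zipf–Poisson ensemble with `α > 1`, `N > 0` and any integer `n ≥ 2`,
`Pr(X₁ > X₂ > … > Xₙ) ≥ 1 - n * exp(-(N α²/4) n^(-α-2))`. -/
theorem zipf_poisson_order_bound
    {Ω : Type*} [MeasurableSpace Ω] (P : Measure Ω) [IsProbabilityMeasure P]
    (X : ℕ → Ω → ℕ) (α N : ℝ) (hα : 1 < α) (hN : 0 < N)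
    (hzp : IsZipfPoisson P X α N) (n : ℕ) (hn : 2 ≤ n) :
    ENNReal.ofReal
        (1 - n * Real.exp (-(N * α ^ 2 / 4) * (n : ℝ) ^ (-α - 2)))
      ≤ P {ω | ∀ i : ℕ, 1 ≤ i → i < n → X (i + 1) ω < X i ω} :=
  zipf_poisson_order_bound_general P X α N hα hN hzp n
end

section
/- Let α > 1 and set A = α²(α+2)/4. Let N > 1 and let n = (A_N N / log N)^{1/(α+2)} (a positive real number) where 0 < A_N ≤ A. Then n·exp(−(N α² / 4) · n^{−α−2}) ≤ (A / log N)^{1/(α+2)}. -/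
/-- Key computation: with `α > 1`, `A = α²(α+2)/4`, `N > 1`, `0 < A_N ≤ A` and
`n = (A_N N / log N)^(1/(α+2))`, one has
`n * exp(-(N α²/4) n^(-α-2)) ≤ (A / log N)^(1/(α+2))`. -/
theorem key_rate_computation
    (α : ℝ) (hα : 1 < α) (N : ℝ) (hN : 1 < N)
    (A_N : ℝ) (hA_N : 0 < A_N) (hA_N_le : A_N ≤ α ^ 2 * (α + 2) / 4)
    (n : ℝ) (hn : n = (A_N * N / Real.log N) ^ ((1 : ℝ) / (α + 2))) :
    n * Real.exp (-(N * α ^ 2 / 4) * n ^ (-α - 2)) ≤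
      (α ^ 2 * (α + 2) / 4 / Real.log N) ^ ((1 : ℝ) / (α + 2)) := by
  set L := Real.log N with hLdef
  have hα2 : (0:ℝ) < α + 2 := by linarith
  have hL : 0 < L := Real.log_pos hN
  have hN0 : (0:ℝ) < N := by linarith
  have hbase : 0 < A_N * N / L := by positivity
  -- compute n ^ (-α-2)
  have hpow : n ^ (-α - 2) = L / (A_N * N) := by
    rw [hn, ← Real.rpow_mul hbase.le]
    have h1 : (1 : ℝ) / (α + 2) * (-α - 2) = -1 := by
      field_simp
      ring
    rw [h1, Real.rpow_neg_one, inv_div]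
  -- compute exponential argument
  have harg : -(N * α ^ 2 / 4) * (L / (A_N * N)) = -(α ^ 2 / (4 * A_N)) * L := by
    field_simp
  have hexp : Real.exp (-(N * α ^ 2 / 4) * n ^ (-α - 2))
      = N ^ (-(α ^ 2 / (4 * A_N))) := by
    rw [hpow, harg, Real.rpow_def_of_pos hN0, mul_comm]
  -- split base
  have hsplit : (A_N * N / L : ℝ) = (A_N / L) * N := by ring
  have hcd : (1 : ℝ) / (α + 2) + (-(α ^ 2 / (4 * A_N))) ≤ 0 := by
    have h4 : (0:ℝ) < 4 * A_N := by linarith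
    rw [← sub_nonpos] at *
    have : (1 : ℝ) / (α + 2) ≤ α ^ 2 / (4 * A_N) := by
      rw [div_le_div_iff₀ hα2 h4]
      nlinarith
    linarith
  calc n * Real.exp (-(N * α ^ 2 / 4) * n ^ (-α - 2))
      = (A_N / L) ^ ((1:ℝ)/(α+2)) * N ^ ((1:ℝ)/(α+2)) * N ^ (-(α ^ 2 / (4 * A_N))) := by
        rw [hexp, hn, hsplit, Real.mul_rpow (by positivity) hN0.le]
    _ = (A_N / L) ^ ((1:ℝ)/(α+2)) * N ^ ((1:ℝ)/(α+2) + (-(α ^ 2 / (4 * A_N)))) := by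
        rw [mul_assoc, ← Real.rpow_add hN0]
    _ ≤ (α ^ 2 * (α + 2) / 4 / L) ^ ((1:ℝ)/(α+2)) * 1 := by
        apply mul_le_mul
        · apply Real.rpow_le_rpow (by positivity)
          · gcongr
          · positivity
        · exact Real.rpow_le_one_of_one_le_of_nonpos hN.le hcd
        · positivity
        · positivity
    _ = (α ^ 2 * (α + 2) / 4 / L) ^ ((1:ℝ)/(α+2)) := mul_one _
end

section
/- Let X_i, i ≥ 1, be from the Zipf–Poisson ensemble with parameters α > 1 and N > 0, and write λ_n = N n^{−α}. If τ is a real number with τ ≥ λ_n and τ > 1/α, then Pr(sup_{i > n} X_i > τ) ≤ (N^{1/α} / α) · ((τ+1) / (τ+1−λ_n)) · (τ^{−1/α} / (τ − 1/α)). -/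
/-!
Put `k = ⌊τ⌋ + 1`, so that `X_i > τ` means `X_i ≥ k`, and use the union bound over `i > n`.
Comparing the Poisson tail with a geometric series of ratio `λ_i / (k + 1)` gives
`P(X_i ≥ k) ≤ e^{-λ_i} λ_i^k / k! · (τ + 1) / (τ + 1 - λ_n)`. Since `u ↦ e^{-u} u^k` increases
on `[0, k]` and `λ_i ≤ λ_n ≤ τ < k`, the sum of `e^{-λ_i} λ_i^k` over `i > n` is at most
`∫_0^∞ e^{-N x^{-α}} (N x^{-α})^k dx = N^{1/α} / α · Γ(k - 1/α)`. Finally, log-convexity of `Γ`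
gives `Γ(k - 1/α) / k! ≤ k^{-1/α} / (k - 1/α) ≤ τ^{-1/α} / (τ - 1/α)`.
-/

open MeasureTheory ProbabilityTheory

open Real Set
open scoped ENNReal

noncomputable def poissonWeight (k : ℕ) (r : ℝ) : ℝ := exp (-r) * r ^ k

lemma poissonWeight_nonneg (k : ℕ) {r : ℝ} (hr : 0 ≤ r) : 0 ≤ poissonWeight k r := by
  unfold poissonWeight; positivity

lemma poissonWeight_le_poissonWeight {k : ℕ} {a b : ℝ} (ha : 0 < a) (hab : a ≤ b)
    (hbk : b ≤ k) : poissonWeight k a ≤ poissonWeight k b := by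
  have hb : 0 < b := ha.trans_le hab
  have hratio : a / b ≤ exp (a / b - 1) := by linarith [add_one_le_exp (a / b - 1)]
  have hexponent : (k : ℝ) * (a / b - 1) ≤ a - b := by
    have hkb : 1 ≤ k / b := (one_le_div hb).2 hbk
    rw [show (k : ℝ) * (a / b - 1) = k / b * (a - b) by field_simp]
    nlinarith
  unfold poissonWeight
  calc exp (-a) * a ^ k = exp (-a) * b ^ k * (a / b) ^ k := by
        rw [div_pow]; field_simp
    _ ≤ exp (-a) * b ^ k * exp (a / b - 1) ^ k := by gcongr
    _ = exp (-a) * b ^ k * exp (k * (a / b - 1)) := by rw [exp_nat_mul]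
    _ ≤ exp (-a) * b ^ k * exp (a - b) := by gcongr
    _ = exp (-b) * b ^ k := by rw [mul_right_comm, ← exp_add]; ring_nf

lemma pow_div_factorial_add_le {r : ℝ} (hr : 0 ≤ r) (k j : ℕ) :
    r ^ (k + j) / (k + j).factorial ≤ r ^ k / k.factorial * (r / (k + 1)) ^ j := by
  have hfac : (k.factorial : ℝ) * ((k : ℝ) + 1) ^ j ≤ (k + j).factorial := by
    exact_mod_cast Nat.factorial_mul_pow_le_factorial
  calc r ^ (k + j) / (k + j).factorial ≤ r ^ (k + j) / (k.factorial * ((k : ℝ) + 1) ^ j) :=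
        div_le_div_of_nonneg_left (by positivity) (by positivity) hfac
    _ = r ^ k / k.factorial * (r / (k + 1)) ^ j := by rw [pow_add, div_pow, div_mul_div_comm]

section Poisson

variable {Ω : Type*} [MeasurableSpace Ω] {P : Measure Ω} {Y : Ω → ℕ} {r : ℝ}

lemma poisson_tail_le (hY : ∀ m : ℕ, P {ω | Y ω = m} =
      ENNReal.ofReal (exp (-r) * r ^ m / m.factorial))
    (hr : 0 ≤ r) {k : ℕ} (hrk : r < k + 1) :
    P {ω | k ≤ Y ω} ≤
      ENNReal.ofReal (poissonWeight k r / k.factorial * ((k + 1) / (k + 1 - r))) := by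
  set q := r / (k + 1)
  have hq0 : 0 ≤ q := by positivity
  have hq1 : q < 1 := (div_lt_one (by positivity)).2 hrk
  have hc : 0 ≤ poissonWeight k r / k.factorial :=
    div_nonneg (poissonWeight_nonneg k hr) (Nat.cast_nonneg _)
  have hterm (j : ℕ) : P {ω | Y ω = k + j} ≤
      ENNReal.ofReal (poissonWeight k r / k.factorial * q ^ j) := by
    rw [hY, poissonWeight, mul_div_assoc, mul_div_assoc, mul_assoc]
    gcongr
    exact pow_div_factorial_add_le hr k j
  have hsub : {ω | k ≤ Y ω} ⊆ ⋃ j : ℕ, {ω | Y ω = k + j} := fun ω hω =>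
    mem_iUnion.2 ⟨Y ω - k, by simp [Nat.add_sub_cancel' (show k ≤ Y ω from hω)]⟩
  calc P {ω | k ≤ Y ω} ≤ ∑' j : ℕ, P {ω | Y ω = k + j} :=
        (measure_mono hsub).trans (measure_iUnion_le _)
    _ ≤ ∑' j : ℕ, ENNReal.ofReal (poissonWeight k r / k.factorial * q ^ j) :=
        ENNReal.tsum_le_tsum hterm
    _ = ENNReal.ofReal (poissonWeight k r / k.factorial * (1 - q)⁻¹) := by
        rw [← ENNReal.ofReal_tsum_of_nonneg (fun j => mul_nonneg hc (pow_nonneg hq0 j))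
          ((summable_geometric_of_lt_one hq0 hq1).mul_left _), tsum_mul_left,
          tsum_geometric_of_lt_one hq0 hq1]
    _ = ENNReal.ofReal (poissonWeight k r / k.factorial * ((k + 1) / (k + 1 - r))) := by
        rw [show 1 - q = (k + 1 - r) / (k + 1) by simp only [q]; field_simp, inv_div]

lemma poisson_tail_lt_le (hY : ∀ m : ℕ, P {ω | Y ω = m} =
      ENNReal.ofReal (exp (-r) * r ^ m / m.factorial))
    (hr : 0 ≤ r) {τ : ℝ} (hrτ : r ≤ τ) :
    P {ω | τ < Y ω} ≤ ENNReal.ofReal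
      (poissonWeight (⌊τ⌋₊ + 1) r / (⌊τ⌋₊ + 1).factorial * ((τ + 1) / (τ + 1 - r))) := by
  set k := ⌊τ⌋₊ + 1
  have hτk : τ < k := by simpa [k] using Nat.lt_floor_add_one τ
  have hset : {ω | τ < Y ω} = {ω | k ≤ Y ω} := by
    ext ω
    simp only [mem_ofPred_eq, k, Nat.add_one_le_iff, Nat.floor_lt (hr.trans hrτ)]
  have hratio : ((k : ℝ) + 1) / (k + 1 - r) ≤ (τ + 1) / (τ + 1 - r) := by
    rw [div_le_div_iff₀ (by linarith) (by linarith)]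
    nlinarith
  rw [hset]
  refine (poisson_tail_le hY hr (by linarith)).trans (ENNReal.ofReal_le_ofReal ?_)
  have := poissonWeight_nonneg k hr
  gcongr

end Poisson

lemma tsum_le_setLIntegral_Ioi_of_antitoneOn {f : ℝ → ℝ≥0∞} {a : ℝ}
    (hf : AntitoneOn f (Ici a)) : ∑' j : ℕ, f (a + j + 1) ≤ ∫⁻ x in Ioi a, f x := by
  have hdisj : Pairwise (Function.onFun Disjoint fun j : ℕ => Ioc (a + j) (a + j + 1)) :=
    fun i j hij => by
      simpa using pairwise_disjoint_Ioc_add_intCast a (Nat.cast_injective.ne hij : (i : ℤ) ≠ j)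
  have hsub : (⋃ j : ℕ, Ioc (a + j) (a + j + 1)) ⊆ Ioi a :=
    iUnion_subset fun j x hx => mem_Ioi.2 (by linarith [hx.1, j.cast_nonneg (α := ℝ)])
  calc ∑' j : ℕ, f (a + j + 1) ≤ ∑' j : ℕ, ∫⁻ x in Ioc (a + j) (a + j + 1), f x := by
        refine ENNReal.tsum_le_tsum fun j => ?_
        calc f (a + j + 1) = ∫⁻ _ in Ioc (a + j) (a + j + 1), f (a + j + 1) := by simp
          _ ≤ ∫⁻ x in Ioc (a + j) (a + j + 1), f x := by
              refine setLIntegral_mono' measurableSet_Ioc fun x hx => hf ?_ ?_ hx.2 <;>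
                exact mem_Ici.2 (by linarith [hx.1, j.cast_nonneg (α := ℝ)])
    _ = ∫⁻ x in ⋃ j : ℕ, Ioc (a + j) (a + j + 1), f x :=
        (lintegral_iUnion (fun _ => measurableSet_Ioc) hdisj f).symm
    _ ≤ ∫⁻ x in Ioi a, f x := lintegral_mono_set hsub

-- The integrand of `integral_comp_rpow_Ioi` for `x ↦ x⁻¹`, recast in the shape of
-- `integral_rpow_mul_exp_neg_mul_rpow`.
lemma poissonWeight_mul_rpow_neg_inv {α N x : ℝ} (k : ℕ) (hx : 0 < x) :
    |(-1 : ℝ)| * x ^ ((-1 : ℝ) - 1) * poissonWeight k (N * (x ^ (-1 : ℝ)) ^ (-α)) =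
      N ^ k * (x ^ (α * k - 2) * exp (-N * x ^ α)) := by
  have hinv : (x ^ (-1 : ℝ)) ^ (-α) = x ^ α := by rw [← rpow_mul hx.le]; ring_nf
  have hpow : (x ^ α) ^ k = x ^ (α * k) := by rw [← rpow_natCast, ← rpow_mul hx.le]
  rw [poissonWeight, hinv, mul_pow, hpow, show α * k - 2 = (-1 - 1) + α * k by ring,
    rpow_add hx]
  simp only [abs_neg, abs_one, neg_mul]
  ring

lemma integrableOn_poissonWeight_mul_rpow_neg {α N : ℝ} {k : ℕ} (hα : 0 < α) (hN : 0 < N)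
    (hk : 1 < α * k) : IntegrableOn (fun x => poissonWeight k (N * x ^ (-α))) (Ioi 0) := by
  rw [← integrableOn_Ioi_comp_rpow_iff _ (by norm_num : (-1 : ℝ) ≠ 0)]
  have hGamma := integrableOn_rpow_mul_exp_neg_mul_rpow (s := α * k - 2) (by linarith) hα hN
  refine IntegrableOn.congr_fun (hGamma.const_mul (N ^ k)) (fun x hx => ?_) measurableSet_Ioi
  rw [smul_eq_mul, poissonWeight_mul_rpow_neg_inv k hx]

lemma integral_poissonWeight_mul_rpow_neg {α N : ℝ} {k : ℕ} (hα : 0 < α) (hN : 0 < N)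
    (hk : 1 < α * k) :
    ∫ x in Ioi 0, poissonWeight k (N * x ^ (-α)) = N ^ (1 / α) / α * Gamma (k - 1 / α) := by
  rw [← integral_comp_rpow_Ioi _ (by norm_num : (-1 : ℝ) ≠ 0)]
  simp_rw [smul_eq_mul]
  rw [setIntegral_congr_fun measurableSet_Ioi fun x hx => poissonWeight_mul_rpow_neg_inv k hx,
    integral_const_mul, integral_rpow_mul_exp_neg_mul_rpow hα (by linarith) hN]
  have hexp : (k : ℝ) + -(α * k - 2 + 1) / α = 1 / α := by field_simp; ring
  rw [show (α * k - 2 + 1) / α = k - 1 / α by field_simp; ring, ← mul_assoc, ← mul_assoc,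
    ← rpow_natCast, ← rpow_add hN, hexp]
  ring

lemma lintegral_poissonWeight_mul_rpow_neg {α N : ℝ} {k : ℕ} (hα : 0 < α) (hN : 0 < N)
    (hk : 1 < α * k) :
    ∫⁻ x in Ioi 0, ENNReal.ofReal (poissonWeight k (N * x ^ (-α))) =
      ENNReal.ofReal (N ^ (1 / α) / α * Gamma (k - 1 / α)) := by
  rw [← integral_poissonWeight_mul_rpow_neg hα hN hk, ofReal_integral_eq_lintegral_ofReal
    (integrableOn_poissonWeight_mul_rpow_neg hα hN hk)]
  filter_upwards [ae_restrict_mem measurableSet_Ioi] with x hx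
  exact poissonWeight_nonneg k (by have := rpow_pos_of_pos (mem_Ioi.1 hx) (-α); positivity)

lemma antitoneOn_poissonWeight_mul_rpow_neg {α N a : ℝ} {k : ℕ} (hα : 0 ≤ α) (hN : 0 < N)
    (ha : 0 < a) (hak : N * a ^ (-α) ≤ k) :
    AntitoneOn (fun x => poissonWeight k (N * x ^ (-α))) (Ici a) := by
  intro x hx y hy hxy
  have hx0 : 0 < x := ha.trans_le hx
  have hy0 : 0 < y := ha.trans_le hy
  exact poissonWeight_le_poissonWeight (mul_pos hN (rpow_pos_of_pos hy0 _))
    (mul_le_mul_of_nonneg_left (rpow_le_rpow_of_nonpos hx0 hxy (neg_nonpos.2 hα)) hN.le)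
    ((mul_le_mul_of_nonneg_left (rpow_le_rpow_of_nonpos ha hx (neg_nonpos.2 hα)) hN.le).trans hak)

lemma tsum_ofReal_poissonWeight_mul_rpow_neg_le {α N a : ℝ} {k : ℕ} (hα : 0 < α) (hN : 0 < N)
    (hk : 1 < α * k) (ha : 0 < a) (hak : N * a ^ (-α) ≤ k) :
    ∑' j : ℕ, ENNReal.ofReal (poissonWeight k (N * (a + j + 1) ^ (-α))) ≤
      ENNReal.ofReal (N ^ (1 / α) / α * Gamma (k - 1 / α)) := by
  have hanti := antitoneOn_poissonWeight_mul_rpow_neg hα.le hN ha hak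
  calc ∑' j : ℕ, ENNReal.ofReal (poissonWeight k (N * (a + j + 1) ^ (-α)))
      ≤ ∫⁻ x in Ioi a, ENNReal.ofReal (poissonWeight k (N * x ^ (-α))) :=
        tsum_le_setLIntegral_Ioi_of_antitoneOn fun x hx y hy hxy =>
          ENNReal.ofReal_le_ofReal (hanti hx hy hxy)
    _ ≤ ∫⁻ x in Ioi 0, ENNReal.ofReal (poissonWeight k (N * x ^ (-α))) :=
        lintegral_mono_set (Ioi_subset_Ioi ha.le)
    _ = ENNReal.ofReal (N ^ (1 / α) / α * Gamma (k - 1 / α)) :=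
        lintegral_poissonWeight_mul_rpow_neg hα hN hk

lemma Gamma_add_one_sub_le {x s : ℝ} (hx : 0 < x) (hs0 : 0 < s) (hs1 : s < 1) :
    Gamma (x + 1 - s) ≤ x ^ (-s) * Gamma (x + 1) := by
  have hΓ : 0 < Gamma x := Gamma_pos_of_pos hx
  calc Gamma (x + 1 - s) = Gamma (s * x + (1 - s) * (x + 1)) := by ring_nf
    _ ≤ Gamma x ^ s * Gamma (x + 1) ^ (1 - s) :=
        Gamma_mul_add_mul_le_rpow_Gamma_mul_rpow_Gamma hx (by linarith) hs0 (by linarith)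
          (by ring)
    _ = x ^ (-s) * Gamma (x + 1) := by
        rw [Gamma_add_one hx.ne', mul_rpow hx.le hΓ.le, rpow_sub hx, rpow_sub hΓ, rpow_one,
          rpow_one, rpow_neg hx.le]
        field_simp

lemma Gamma_sub_div_Gamma_add_one_le {x s τ : ℝ} (hs0 : 0 < s) (hs1 : s < 1) (hsτ : s < τ)
    (hτx : τ ≤ x) : Gamma (x - s) / Gamma (x + 1) ≤ τ ^ (-s) / (τ - s) := by
  have hτ : 0 < τ := hs0.trans hsτ
  have hx : 0 < x := hτ.trans_le hτx
  have hxs : 0 < x - s := by linarith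
  have hrec : Gamma (x + 1 - s) = (x - s) * Gamma (x - s) := by
    rw [← Gamma_add_one hxs.ne']; ring_nf
  calc Gamma (x - s) / Gamma (x + 1) ≤ x ^ (-s) / (x - s) := by
        rw [div_le_div_iff₀ (Gamma_pos_of_pos (by linarith)) hxs]
        linarith [Gamma_add_one_sub_le hx hs0 hs1]
    _ ≤ τ ^ (-s) / (τ - s) :=
        div_le_div₀ (by positivity) (rpow_le_rpow_of_nonpos hτ hτx (by linarith))
          (by linarith) (by linarith)

lemma IsZipfPoisson.measure_lt_le {Ω : Type*} [MeasurableSpace Ω] {P : Measure Ω}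
    {X : ℕ → Ω → ℕ} {α N : ℝ} (hzp : IsZipfPoisson P X α N) (hα : 0 ≤ α) (hN : 0 ≤ N)
    {n i : ℕ} (hn : 1 ≤ n) (hni : n ≤ i) {τ : ℝ} (hτ : N * (n : ℝ) ^ (-α) ≤ τ) :
    P {ω | τ < X i ω} ≤
      ENNReal.ofReal ((τ + 1) / (τ + 1 - N * (n : ℝ) ^ (-α)) / (⌊τ⌋₊ + 1).factorial) *
        ENNReal.ofReal (poissonWeight (⌊τ⌋₊ + 1) (N * (i : ℝ) ^ (-α))) := by
  have hn0 : (0 : ℝ) < n := by exact_mod_cast hn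
  have hi0 : 0 ≤ N * (i : ℝ) ^ (-α) := by positivity
  have hin : N * (i : ℝ) ^ (-α) ≤ N * (n : ℝ) ^ (-α) :=
    mul_le_mul_of_nonneg_left (rpow_le_rpow_of_nonpos hn0 (by exact_mod_cast hni)
      (neg_nonpos.2 hα)) hN
  have hτ0 : 0 ≤ τ := hi0.trans (hin.trans hτ)
  have hweight := div_nonneg (poissonWeight_nonneg (⌊τ⌋₊ + 1) hi0)
    (Nat.cast_nonneg (⌊τ⌋₊ + 1).factorial)
  rw [← ENNReal.ofReal_mul (div_nonneg (div_nonneg (by linarith) (by linarith)) (by positivity))]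
  refine (poisson_tail_lt_le (hzp.2 i (hn.trans hni)) hi0 (hin.trans hτ)).trans
    (ENNReal.ofReal_le_ofReal ?_)
  calc poissonWeight (⌊τ⌋₊ + 1) (N * (i : ℝ) ^ (-α)) / (⌊τ⌋₊ + 1).factorial *
        ((τ + 1) / (τ + 1 - N * (i : ℝ) ^ (-α)))
      ≤ poissonWeight (⌊τ⌋₊ + 1) (N * (i : ℝ) ^ (-α)) / (⌊τ⌋₊ + 1).factorial *
        ((τ + 1) / (τ + 1 - N * (n : ℝ) ^ (-α))) := by
        gcongr
        linarith
    _ = _ := by ring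

theorem zipf_poisson_tail_jump_bound_general
    {Ω : Type*} [MeasurableSpace Ω] (P : Measure Ω)
    (X : ℕ → Ω → ℕ) (α N : ℝ) (hα : 1 < α) (hN : 0 < N)
    (hzp : IsZipfPoisson P X α N)
    (n : ℕ) (hn : 1 ≤ n) (τ : ℝ)
    (hτ : N * (n : ℝ) ^ (-α) ≤ τ) (hτα : 1 / α < τ) :
    P {ω | ∃ i : ℕ, n < i ∧ τ < (X i ω : ℝ)} ≤
      ENNReal.ofReal
        (N ^ (1 / α) / α * ((τ + 1) / (τ + 1 - N * (n : ℝ) ^ (-α))) *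
          (τ ^ (-1 / α) / (τ - 1 / α))) := by
  have hα0 : 0 < α := by linarith
  have hs1 : 1 / α < 1 := (div_lt_one hα0).2 hα
  set k := ⌊τ⌋₊ + 1
  set A := (τ + 1) / (τ + 1 - N * (n : ℝ) ^ (-α))
  have hτ0 : 0 < τ := (by positivity : 0 < 1 / α).trans hτα
  have hA : 0 < A := div_pos (by linarith) (by linarith)
  have hτk : τ < k := by simpa [k] using Nat.lt_floor_add_one τ
  have hk : 1 < α * k := by rw [div_lt_iff₀ hα0] at hτα; nlinarith
  have hsub : {ω | ∃ i : ℕ, n < i ∧ τ < (X i ω : ℝ)} ⊆ ⋃ j : ℕ, {ω | τ < X (n + j + 1) ω} :=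
    fun ω ⟨i, hi, hω⟩ =>
      mem_iUnion.2 ⟨i - (n + 1), by rwa [show n + (i - (n + 1)) + 1 = i by omega]⟩
  calc P {ω | ∃ i : ℕ, n < i ∧ τ < (X i ω : ℝ)}
      ≤ ∑' j : ℕ, P {ω | τ < X (n + j + 1) ω} := (measure_mono hsub).trans (measure_iUnion_le _)
    _ ≤ ∑' j : ℕ, ENNReal.ofReal (A / k.factorial) *
          ENNReal.ofReal (poissonWeight k (N * ((n + j + 1 : ℕ) : ℝ) ^ (-α))) :=
        ENNReal.tsum_le_tsum fun j => hzp.measure_lt_le hα0.le hN.le hn (by omega) hτ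
    _ ≤ ENNReal.ofReal (A / k.factorial) *
          ENNReal.ofReal (N ^ (1 / α) / α * Gamma (k - 1 / α)) := by
        rw [ENNReal.tsum_mul_left]
        gcongr
        push_cast
        exact tsum_ofReal_poissonWeight_mul_rpow_neg_le hα0 hN hk (by exact_mod_cast hn)
          (hτ.trans hτk.le)
    _ ≤ _ := by
        rw [← ENNReal.ofReal_mul (by positivity), neg_div]
        refine ENNReal.ofReal_le_ofReal ?_
        have hΓ := Gamma_sub_div_Gamma_add_one_le (by positivity) hs1 hτα hτk.le
        rw [Gamma_nat_eq_factorial] at hΓ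
        calc A / k.factorial * (N ^ (1 / α) / α * Gamma (k - 1 / α))
            = N ^ (1 / α) / α * A * (Gamma (k - 1 / α) / k.factorial) := by ring
          _ ≤ _ := by gcongr

/-- Tail jump bound: in the Zipf–Poisson ensemble, if `τ ≥ λ_n = N n^(-α)` and
`τ > 1/α`, then
`Pr(sup_{i>n} X_i > τ) ≤ (N^(1/α)/α) ((τ+1)/(τ+1-λ_n)) (τ^(-1/α)/(τ-1/α))`. -/
theorem zipf_poisson_tail_jump_bound
    {Ω : Type*} [MeasurableSpace Ω] (P : Measure Ω) [IsProbabilityMeasure P]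
    (X : ℕ → Ω → ℕ) (α N : ℝ) (hα : 1 < α) (hN : 0 < N)
    (hzp : IsZipfPoisson P X α N)
    (n : ℕ) (hn : 1 ≤ n) (τ : ℝ)
    (hτ : N * (n : ℝ) ^ (-α) ≤ τ) (hτα : 1 / α < τ) :
    P {ω | ∃ i : ℕ, n < i ∧ τ < (X i ω : ℝ)} ≤
      ENNReal.ofReal
        (N ^ (1 / α) / α * ((τ + 1) / (τ + 1 - N * (n : ℝ) ^ (-α))) *
          (τ ^ (-1 / α) / (τ - 1 / α))) :=
  zipf_poisson_tail_jump_bound_general P X α N hα hN hzp n hn τ hτ hτα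
end

section
/- Let α > 1, N > 0, let n ≥ 1 be an integer, and let τ be a real number with τ ≥ N n^{−α} and τ > 1/α. Then Σ_{i=n+1}^{∞} e^{−N i^{−α}} (N i^{−α})^{τ} ≤ (N^{1/α} / α) · Γ(τ − 1/α), where Γ is the Gamma function. -/
open MeasureTheory intervalIntegral

lemma gmono_aux (τ b y : ℝ) (hb : 0 < b) (hby : b ≤ y) (hyτ : y ≤ τ) :
    Real.exp (-b) * b ^ τ ≤ Real.exp (-y) * y ^ τ := by
  have hy : 0 < y := lt_of_lt_of_le hb hby
  rw [Real.rpow_def_of_pos hb, Real.rpow_def_of_pos hy, ← Real.exp_add, ← Real.exp_add]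
  rw [Real.exp_le_exp]
  have h1 : Real.log (b / y) ≤ b / y - 1 := Real.log_le_sub_one_of_pos (by positivity)
  rw [Real.log_div hb.ne' hy.ne'] at h1
  have h2 : y * (Real.log b - Real.log y) ≤ b - y := by
    have := mul_le_mul_of_nonneg_left h1 hy.le
    calc y * (Real.log b - Real.log y) ≤ y * (b / y - 1) := this
      _ = b - y := by field_simp
  have h3 : Real.log b ≤ Real.log y := Real.log_le_log hb hby
  nlinarith [h2, h3, hyτ, hy]

-- computation: (N * (m:ℝ)^(-α))^(-(1/α)) = N^(-(1/α)) * m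
lemma yv_rpow (α N : ℝ) (hα : 0 < α) (hN : 0 < N) (m : ℕ) (hm : 1 ≤ m) :
    (N * (m : ℝ) ^ (-α)) ^ (-(1/α)) = N ^ (-(1/α)) * m := by
  have hm0 : (0:ℝ) < m := by exact_mod_cast hm
  rw [Real.mul_rpow hN.le (Real.rpow_nonneg hm0.le _)]
  congr 1
  rw [← Real.rpow_mul hm0.le]
  rw [show -α * -(1/α) = 1 by field_simp]
  exact Real.rpow_one _

lemma key_step (α N τ : ℝ) (hα : 1 < α) (hN : 0 < N) (k : ℕ) (hk : 1 ≤ k)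
    (hkτ : N * (k : ℝ) ^ (-α) ≤ τ) :
    Real.exp (-(N * ((k+1 : ℕ) : ℝ) ^ (-α))) * (N * ((k+1 : ℕ) : ℝ) ^ (-α)) ^ τ
      ≤ N ^ (1/α) / α *
        ∫ y in (N * ((k+1 : ℕ) : ℝ) ^ (-α))..(N * (k : ℝ) ^ (-α)),
          Real.exp (-y) * y ^ (τ - 1/α - 1) := by
  have hα0 : (0:ℝ) < α := lt_trans one_pos hα
  have hk0 : (0:ℝ) < k := by exact_mod_cast hk
  have hk10 : (0:ℝ) < ((k+1:ℕ):ℝ) := by positivity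
  set b := N * ((k+1 : ℕ) : ℝ) ^ (-α) with hbdef
  set a := N * (k : ℝ) ^ (-α) with hadef
  have hb : 0 < b := by positivity
  have ha : 0 < a := by positivity
  have hba : b ≤ a := by
    apply mul_le_mul_of_nonneg_left _ hN.le
    rw [Real.rpow_neg hk0.le, Real.rpow_neg hk10.le]
    apply inv_anti₀ (by positivity)
    apply Real.rpow_le_rpow hk0.le _ hα0.le
    exact_mod_cast Nat.le_succ k
  have haτ : a ≤ τ := hkτ
  -- pointwise bound on [b,a]
  have hpt : ∀ y ∈ Set.Icc b a,
      Real.exp (-b) * b ^ τ * y ^ (-(1/α) - 1) ≤ Real.exp (-y) * y ^ (τ - 1/α - 1) := by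
    intro y hy
    have hy0 : 0 < y := lt_of_lt_of_le hb hy.1
    have : y ^ (τ - 1/α - 1) = y ^ τ * y ^ (-(1/α) - 1) := by
      rw [← Real.rpow_add hy0]; ring_nf
    rw [this, ← mul_assoc]
    apply mul_le_mul_of_nonneg_right _ (Real.rpow_nonneg hy0.le _)
    exact gmono_aux τ b y hb hy.1 (le_trans hy.2 haτ)
  -- integrability
  have hc1 : ContinuousOn (fun y : ℝ => Real.exp (-b) * b ^ τ * y ^ (-(1/α) - 1))
      (Set.Icc b a) := by
    apply ContinuousOn.mul continuousOn_const
    intro y hy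
    exact (Real.continuousAt_rpow_const y _ (Or.inl (lt_of_lt_of_le hb hy.1).ne')).continuousWithinAt
  have hc2 : ContinuousOn (fun y : ℝ => Real.exp (-y) * y ^ (τ - 1/α - 1)) (Set.Icc b a) := by
    apply ContinuousOn.mul (Real.continuous_exp.comp continuous_neg).continuousOn
    intro y hy
    exact (Real.continuousAt_rpow_const y _ (Or.inl (lt_of_lt_of_le hb hy.1).ne')).continuousWithinAt
  have hmono := intervalIntegral.integral_mono_on hba
    (ContinuousOn.intervalIntegrable_of_Icc (μ := volume) hba hc1) (ContinuousOn.intervalIntegrable_of_Icc (μ := volume) hba hc2) hpt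
  -- compute left integral
  have hcompL : (∫ y in b..a, Real.exp (-b) * b ^ τ * y ^ (-(1/α) - 1))
      = Real.exp (-b) * b ^ τ * (α * N ^ (-(1/α))) := by
    rw [intervalIntegral.integral_const_mul]
    congr 1
    rw [integral_rpow]
    · rw [show -(1/α) - 1 + 1 = -(1/α) by ring]
      rw [hadef, hbdef, yv_rpow α N hα0 hN k hk, yv_rpow α N hα0 hN (k+1) (by omega)]
      push_cast
      field_simp
      ring
    · right
      constructor
      · intro h
        have h2 : (1:ℝ)/α = 0 := by linarith
        exact (by positivity : (0:ℝ) < 1/α).ne' h2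
      · intro h
        rcases Set.mem_uIcc.1 h with h | h
        · exact absurd h.1 (not_le.2 hb)
        · exact absurd h.1 (not_le.2 ha)
  rw [hcompL] at hmono
  calc Real.exp (-b) * b ^ τ
      = N ^ (1/α) / α * (Real.exp (-b) * b ^ τ * (α * N ^ (-(1/α)))) := by
        rw [show N ^ (1/α) / α * (Real.exp (-b) * b ^ τ * (α * N ^ (-(1/α))))
            = Real.exp (-b) * b ^ τ * (N ^ (1/α) * N ^ (-(1/α))) * (α / α) by ring]
        rw [← Real.rpow_add hN, add_neg_cancel, Real.rpow_zero, div_self hα0.ne']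
        ring
    _ ≤ N ^ (1/α) / α * ∫ y in b..a, Real.exp (-y) * y ^ (τ - 1/α - 1) := by
        apply mul_le_mul_of_nonneg_left hmono (by positivity)

/-- Tail-sum bound: for `α > 1`, `N > 0`, an integer `n ≥ 1` and a real `τ` with
`τ ≥ N n^(-α)` and `τ > 1/α`,
`∑_{i=n+1}^∞ e^{-N i^(-α)} (N i^(-α))^τ ≤ (N^(1/α)/α) Γ(τ - 1/α)`. -/
theorem zipf_poisson_tail_sum_bound
    (α N : ℝ) (hα : 1 < α) (hN : 0 < N)
    (n : ℕ) (hn : 1 ≤ n) (τ : ℝ)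
    (hτ : N * (n : ℝ) ^ (-α) ≤ τ) (hτα : 1 / α < τ) :
    (∑' i : {i : ℕ // n < i},
        Real.exp (-(N * ((i : ℕ) : ℝ) ^ (-α))) * (N * ((i : ℕ) : ℝ) ^ (-α)) ^ τ)
      ≤ N ^ (1 / α) / α * Real.Gamma (τ - 1 / α) := by
  have hα0 : (0:ℝ) < α := lt_trans one_pos hα
  have hs : (0:ℝ) < τ - 1/α := by linarith
  set g : ℕ → ℝ := fun i => Real.exp (-(N * (i:ℝ)^(-α))) * (N*(i:ℝ)^(-α))^τ with hgdef
  set yv : ℕ → ℝ := fun i => N * (i:ℝ)^(-α) with hyvdef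
  set h : ℝ → ℝ := fun y => Real.exp (-y) * y^(τ - 1/α - 1) with hhdef
  have hyvpos : ∀ i : ℕ, 1 ≤ i → 0 < yv i := by
    intro i hi
    have : (0:ℝ) < i := by exact_mod_cast hi
    simp only [hyvdef]; positivity
  have hyvmono : ∀ i j : ℕ, 1 ≤ i → i ≤ j → yv j ≤ yv i := by
    intro i j hi hij
    have hi0 : (0:ℝ) < i := by exact_mod_cast hi
    have hj0 : (0:ℝ) < j := lt_of_lt_of_le hi0 (by exact_mod_cast hij)
    simp only [hyvdef]
    apply mul_le_mul_of_nonneg_left _ hN.le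
    rw [Real.rpow_neg hi0.le, Real.rpow_neg hj0.le]
    apply inv_anti₀ (by positivity)
    exact Real.rpow_le_rpow hi0.le (by exact_mod_cast hij) hα0.le
  have hyvτ : ∀ k : ℕ, n ≤ k → yv k ≤ τ := fun k hk =>
    le_trans (hyvmono n k hn hk) hτ
  have hii : ∀ p q : ℕ, 1 ≤ p → 1 ≤ q → IntervalIntegrable h volume (yv p) (yv q) := by
    intro p q hp hq
    apply ContinuousOn.intervalIntegrable
    intro y hy
    have hy0 : 0 < y := lt_of_lt_of_le (lt_min (hyvpos p hp) (hyvpos q hq)) hy.1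
    exact ((Real.continuous_exp.comp continuous_neg).continuousAt.continuousWithinAt).mul
      (Real.continuousAt_rpow_const y _ (Or.inl hy0.ne')).continuousWithinAt
  have sumle : ∀ m : ℕ, (∑ i ∈ Finset.Ioc n (n+m), g i)
      ≤ N^(1/α)/α * ∫ y in yv (n+m)..yv n, h y := by
    intro m
    induction m with
    | zero => simp
    | succ m ih =>
      rw [show n + (m+1) = (n+m) + 1 from rfl,
        Finset.sum_Ioc_succ_top (Nat.le_add_right n m)]
      have hnm : 1 ≤ n + m := le_trans hn (Nat.le_add_right n m)
      have hkey := key_step α N τ hα hN (n+m) hnm (hyvτ (n+m) (Nat.le_add_right n m))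
      have hadd : (∫ y in yv ((n+m)+1)..yv (n+m), h y) + (∫ y in yv (n+m)..yv n, h y)
          = ∫ y in yv ((n+m)+1)..yv n, h y :=
        intervalIntegral.integral_add_adjacent_intervals
          (hii _ _ (by omega) hnm) (hii _ _ hnm hn)
      calc (∑ i ∈ Finset.Ioc n (n+m), g i) + g ((n+m)+1)
          ≤ (N^(1/α)/α * ∫ y in yv (n+m)..yv n, h y)
            + (N^(1/α)/α * ∫ y in yv ((n+m)+1)..yv (n+m), h y) := add_le_add ih hkey
        _ = N^(1/α)/α * ∫ y in yv ((n+m)+1)..yv n, h y := by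
            rw [← mul_add, add_comm (∫ y in yv (n+m)..yv n, h y), hadd]
  have intle : ∀ m : ℕ, (∫ y in yv (n+m)..yv n, h y) ≤ Real.Gamma (τ - 1/α) := by
    intro m
    have hnm : 1 ≤ n + m := le_trans hn (Nat.le_add_right n m)
    have hb := hyvpos (n+m) hnm
    rw [intervalIntegral.integral_of_le (hyvmono n (n+m) hn (Nat.le_add_right n m)),
      Real.Gamma_eq_integral hs]
    apply setIntegral_mono_set (Real.GammaIntegral_convergent hs)
    · filter_upwards [ae_restrict_mem measurableSet_Ioi] with y hy
      have : (0:ℝ) < y := hy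
      positivity
    · filter_upwards with y hy
      exact hb.trans hy.1
  have hΓ : 0 < Real.Gamma (τ - 1/α) := Real.Gamma_pos_of_pos hs
  apply tsum_le_of_sum_le' (mul_nonneg (by positivity) hΓ.le)
  intro u
  have hinj : Set.InjOn (Subtype.val : {i : ℕ // n < i} → ℕ) u := fun a _ b _ hab =>
    Subtype.ext hab
  rw [show (∑ j ∈ u, Real.exp (-(N * ((j : ℕ) : ℝ) ^ (-α))) * (N * ((j : ℕ) : ℝ) ^ (-α)) ^ τ)
      = ∑ i ∈ u.image Subtype.val, g i from (Finset.sum_image (f := g) (fun a ha b hb => hinj ha hb)).symm]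
  set M := (u.image (Subtype.val : {i : ℕ // n < i} → ℕ)).sup id with hM
  have hsub : u.image Subtype.val ⊆ Finset.Ioc n (n + M) := by
    intro i hi
    rw [Finset.mem_Ioc]
    obtain ⟨j, hj, rfl⟩ := Finset.mem_image.1 hi
    refine ⟨j.2, ?_⟩
    have : (j : ℕ) ≤ M := Finset.le_sup (f := id) hi
    omega
  calc (∑ i ∈ u.image Subtype.val, g i)
      ≤ ∑ i ∈ Finset.Ioc n (n + M), g i := by
        apply Finset.sum_le_sum_of_subset_of_nonneg hsub
        intro i hi _
        have hi1 : 1 ≤ i := by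
          rw [Finset.mem_Ioc] at hi; omega
        have hi0 : (0:ℝ) < i := by exact_mod_cast hi1
        simp only [hgdef]; positivity
    _ ≤ N^(1/α)/α * ∫ y in yv (n+M)..yv n, h y := sumle M
    _ ≤ N^(1/α)/α * Real.Gamma (τ - 1/α) :=
        mul_le_mul_of_nonneg_left (intle M) (by positivity)
end

section
/- Let X_i, i ≥ 1, be sampled from the Zipf–Poisson ensemble with parameter α > 1. Let n = n(N) be a positive-integer-valued function of N such that n(N) ≥ C N^{1/(α+2)} for some constant 0 < C < ∞ and all large enough N. Then lim_{N→∞} Pr(X_1 > X_2 > … > X_{n(N)}) = 0. -/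
/-!
Take the `n / 4` disjoint adjacent pairs `(X i, X (i + 1))` in the upper half `n / 2 ≤ i < n` of
the indices. There `i ≳ N ^ (1 / (α + 2))`, and this is exactly the range in which the rates
`λ i = N i ^ (-α)` and `λ (i + 1)` differ by at most a constant multiple `κ` of the standard
deviation `√(λ (i + 1))`. A Stirling bound on the Poisson weights shows that a window of width
`√λ` within `O(√λ)` of the mean carries Poisson mass bounded below, hence `X (i + 1) ≥ X i` with
probability at least some `δ(κ) > 0`. By independence of the pairs, all of them are correctly
ordered with probability at most `(1 - δ) ^ (n / 4) → 0`.
-/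

open MeasureTheory ProbabilityTheory Filter

open Real Finset
open scoped NNReal ENNReal Nat

theorem factorial_le_exp_one_mul_sqrt_mul_pow {k : ℕ} (hk : k ≠ 0) :
    (k ! : ℝ) ≤ exp 1 * √k * (k / exp 1) ^ k := by
  obtain ⟨j, rfl⟩ := Nat.exists_eq_succ_of_ne_zero hk
  have hs : Stirling.stirlingSeq (j + 1) ≤ exp 1 / √2 :=
    Stirling.stirlingSeq_one ▸ Stirling.stirlingSeq'_antitone (Nat.zero_le j)
  have hfac : ((j + 1) ! : ℝ) =
      Stirling.stirlingSeq (j + 1) * (√2 * √(j + 1 : ℕ) * ((j + 1 : ℕ) / exp 1) ^ (j + 1)) := by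
    rw [Stirling.stirlingSeq, ← sqrt_mul zero_le_two]
    field_simp
  rw [hfac]
  calc _ ≤ exp 1 / √2 * (√2 * √(j + 1 : ℕ) * ((j + 1 : ℕ) / exp 1) ^ (j + 1)) := by gcongr
    _ = _ := by field_simp

theorem poissonMeasure_real_singleton_ge {r : ℝ≥0} (hr : 0 < r) {k : ℕ} (hk : k ≠ 0) :
    exp (-((k : ℝ) - r) ^ 2 / r) / (exp 1 * √k) ≤ Po(r).real {k} := by
  have hr' : (0 : ℝ) < r := hr
  have hk' : (0 : ℝ) < k := by exact_mod_cast Nat.pos_of_ne_zero hk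
  -- `k / r ≤ exp (k / r - 1)`, raised to the `k`-th power
  have hratio : (k : ℝ) ^ k ≤ (r : ℝ) ^ k * exp (k * (k - r) / r) := by
    have h := pow_le_pow_left₀ (div_nonneg hk'.le hr'.le)
      (by simpa using add_one_le_exp ((k : ℝ) / r - 1)) k
    rwa [div_pow, ← exp_nat_mul, div_le_iff₀ (by positivity), mul_comm,
      show (k : ℝ) * (k / r - 1) = k * (k - r) / r by field_simp] at h
  have hkey : exp (-((k : ℝ) - r) ^ 2 / r) * (k / exp 1) ^ k ≤ exp (-r) * r ^ k := by
    rw [div_pow, ← exp_nat_mul, mul_div_assoc', div_le_iff₀ (by positivity)]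
    calc exp (-((k : ℝ) - r) ^ 2 / r) * k ^ k
        ≤ exp (-((k : ℝ) - r) ^ 2 / r) * (r ^ k * exp (k * (k - r) / r)) := by gcongr
      _ = exp (-r) * r ^ k * exp (k * 1) := by
        rw [mul_left_comm, ← exp_add, mul_comm (exp (-r : ℝ)), mul_assoc, ← exp_add]
        congr 2
        field_simp
        ring
  rw [poissonMeasure_real_singleton]
  calc exp (-((k : ℝ) - r) ^ 2 / r) / (exp 1 * √k)
      ≤ exp (-r) * r ^ k / (exp 1 * √k * (k / exp 1) ^ k) := by
        rw [le_div_iff₀ (by positivity)]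
        rwa [div_mul_eq_mul_div, mul_left_comm, mul_div_cancel_left₀ _ (by positivity)]
    _ ≤ exp (-r) * r ^ k / k ! := by
        gcongr; exact factorial_le_exp_one_mul_sqrt_mul_pow hk

theorem exists_le_poissonMeasure_real_window {c : ℝ} (hc : 0 ≤ c) :
    ∃ δ > 0, ∀ r : ℝ≥0, 4 * (c + 1) ^ 2 ≤ r → ∀ a : ℝ, |a - r| ≤ c * √r →
      δ ≤ Po(r).real {k : ℕ | a ≤ k ∧ (k : ℝ) ≤ a + √r} := by
  refine ⟨exp (-(c + 1) ^ 2) / (2 * √2 * exp 1), by positivity, fun r hr a ha ↦ ?_⟩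
  set ρ := √(r : ℝ)
  have hρr : ρ ^ 2 = r := sq_sqrt r.coe_nonneg
  have hρ : 2 * (c + 1) ≤ ρ := by
    refine (le_sqrt (by positivity) r.coe_nonneg).2 ?_
    linarith [show (2 * (c + 1)) ^ 2 = 4 * (c + 1) ^ 2 by ring]
  have hρ0 : 0 < ρ := by linarith
  have hr0 : (0 : ℝ) < r := by rw [← hρr]; positivity
  have ha' := abs_le.1 ha
  have ha0 : 0 < a := by nlinarith
  set F := Icc ⌈a⌉₊ ⌊a + ρ⌋₊
  have hF : ∀ k ∈ F, a ≤ k ∧ (k : ℝ) ≤ a + ρ := fun k hk ↦ by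
    rw [mem_Icc, Nat.ceil_le, Nat.le_floor_iff (by positivity)] at hk
    exact hk
  have hcard : ρ / 2 ≤ #F := by
    have h1 := Nat.ceil_lt_add_one ha0.le
    have h2 := Nat.lt_floor_add_one (a + ρ)
    have h3 : ⌈a⌉₊ ≤ ⌊a + ρ⌋₊ + 1 := by exact_mod_cast (by linarith : (⌈a⌉₊ : ℝ) ≤ ⌊a + ρ⌋₊ + 1)
    rw [Nat.card_Icc, Nat.cast_sub h3]
    push_cast
    linarith
  have hpt : ∀ k ∈ F, exp (-(c + 1) ^ 2) / (exp 1 * (√2 * ρ)) ≤ Po(r).real {k} := by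
    intro k hk
    obtain ⟨hak, hka⟩ := hF k hk
    have hk0 : k ≠ 0 := by rintro rfl; simp at hak; linarith
    refine le_trans ?_ (poissonMeasure_real_singleton_ge (by exact_mod_cast hr0) hk0)
    gcongr ?_ / (_ * ?_)
    · rw [exp_le_exp, neg_div, neg_le_neg_iff, div_le_iff₀ hr0, ← hρr, ← mul_pow]
      exact sq_le_sq' (by nlinarith) (by nlinarith)
    · calc √(k : ℝ) ≤ √(2 * r) := sqrt_le_sqrt (by nlinarith)
        _ = √2 * ρ := sqrt_mul zero_le_two _
  calc exp (-(c + 1) ^ 2) / (2 * √2 * exp 1)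
      = ρ / 2 * (exp (-(c + 1) ^ 2) / (exp 1 * (√2 * ρ))) := by field_simp
    _ ≤ #F * (exp (-(c + 1) ^ 2) / (exp 1 * (√2 * ρ))) := by gcongr
    _ ≤ ∑ k ∈ F, Po(r).real {k} := by simpa using card_nsmul_le_sum F _ _ hpt
    _ = Po(r).real F := sum_measureReal_singleton F
    _ ≤ _ := measureReal_mono fun k hk ↦ hF k hk

theorem exists_le_poissonMeasure_prod_le {κ : ℝ} (hκ : 0 ≤ κ) :
    ∃ δ > (0 : ℝ≥0∞), ∀ lam mu : ℝ≥0, mu ≤ lam → (lam : ℝ) - mu ≤ κ * √mu →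
      δ ≤ (Po(lam).prod Po(mu)) {p | p.1 ≤ p.2} := by
  obtain ⟨δ₁, hδ₁, h₁⟩ := exists_le_poissonMeasure_real_window zero_le_one
  obtain ⟨δ₂, hδ₂, h₂⟩ := exists_le_poissonMeasure_real_window (c := κ + 1) (by linarith)
  refine ⟨min (.ofReal (exp (-(16 * (κ + 2) ^ 2)))) (.ofReal δ₁ * .ofReal δ₂),
    lt_min (by simpa using exp_pos _) (by simp [hδ₁, hδ₂]), fun lam mu hle hgap ↦ ?_⟩
  by_cases hsmall : (lam : ℝ) ≤ 16 * (κ + 2) ^ 2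
  · -- the first coordinate vanishes with probability `exp (-lam)`
    calc _ ≤ ENNReal.ofReal (exp (-(16 * (κ + 2) ^ 2))) := min_le_left _ _
      _ ≤ Po(lam) {0} * Po(mu) Set.univ := by
        rw [poissonMeasure_singleton, measure_univ, mul_one, pow_zero, Nat.factorial_zero,
          Nat.cast_one, mul_one, div_one]
        exact ENNReal.ofReal_le_ofReal (exp_le_exp.2 (neg_le_neg hsmall))
      _ ≤ _ := by
        rw [← Measure.prod_prod]
        exact measure_mono fun p hp ↦ by simp_all
  · -- both coordinates fall on the correct side of `⌈lam⌉₊` with probability bounded below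
    push Not at hsmall
    have hl := sq_sqrt lam.coe_nonneg
    have hm := sq_sqrt mu.coe_nonneg
    have hlm : √(mu : ℝ) ≤ √(lam : ℝ) := sqrt_le_sqrt (by exact_mod_cast hle)
    have hl4 : 4 * (κ + 2) ≤ √(lam : ℝ) :=
      (le_sqrt (by positivity) lam.coe_nonneg).2 (by nlinarith)
    have hmu : 4 * (κ + 2) ^ 2 ≤ (mu : ℝ) := by nlinarith [sqrt_nonneg (mu : ℝ)]
    have hm1 : 1 ≤ √(mu : ℝ) := (le_sqrt zero_le_one mu.coe_nonneg).2 (by nlinarith)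
    have hc1 := Nat.le_ceil (lam : ℝ)
    have hc2 := Nat.ceil_lt_add_one lam.coe_nonneg
    have hlow : ENNReal.ofReal δ₁ ≤ Po(lam) {k | k ≤ ⌈(lam : ℝ)⌉₊} := by
      rw [← ofReal_measureReal]
      refine ENNReal.ofReal_le_ofReal ((h₁ lam (by nlinarith) (lam - √lam)
        (by simp [abs_of_nonneg (sqrt_nonneg _)])).trans (measureReal_mono fun k hk ↦ ?_))
      simp only [Set.mem_ofPred_eq, sub_add_cancel] at hk ⊢
      exact_mod_cast hk.2.trans hc1
    have hhigh : ENNReal.ofReal δ₂ ≤ Po(mu) {k | ⌈(lam : ℝ)⌉₊ ≤ k} := by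
      rw [← ofReal_measureReal]
      refine ENNReal.ofReal_le_ofReal ((h₂ mu (by linarith) ⌈(lam : ℝ)⌉₊ ?_).trans
        (measureReal_mono fun k hk ↦ ?_))
      · rw [abs_le]; constructor <;> nlinarith
      · simp only [Set.mem_ofPred_eq] at hk ⊢
        exact_mod_cast hk.1
    calc _ ≤ ENNReal.ofReal δ₁ * ENNReal.ofReal δ₂ := min_le_right _ _
      _ ≤ Po(lam) {k | k ≤ ⌈(lam : ℝ)⌉₊} * Po(mu) {k | ⌈(lam : ℝ)⌉₊ ≤ k} := by
        gcongr
      _ ≤ _ := by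
        rw [← Measure.prod_prod]
        exact measure_mono fun p ⟨hp1, hp2⟩ ↦ le_trans (α := ℕ) hp1 hp2

namespace ProbabilityTheory

-- The `X i` need not be measurable: `P` is only evaluated on finite intersections of fibres,
-- through independence, and on their countable unions, through subadditivity.
theorem iIndepFun.measure_preimage_le_pi {Ω ι : Type*} [MeasurableSpace Ω] [Fintype ι]
    {β : ι → Type*} [∀ i, MeasurableSpace (β i)] [∀ i, MeasurableSingletonClass (β i)]
    [∀ i, Countable (β i)] {P : Measure Ω} {X : ∀ i, Ω → β i} (hX : iIndepFun X P)
    (μ : ∀ i, Measure (β i)) [∀ i, SigmaFinite (μ i)]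
    (hlaw : ∀ i x, P (X i ⁻¹' {x}) = μ i {x}) (A : Set (∀ i, β i)) :
    P ((fun ω i ↦ X i ω) ⁻¹' A) ≤ Measure.pi μ A := by
  have hcover : (fun ω i ↦ X i ω) ⁻¹' A ⊆ ⋃ v ∈ A, ⋂ i, X i ⁻¹' {v i} := fun ω hω ↦
    Set.mem_biUnion hω (Set.mem_iInter.2 fun i ↦ rfl)
  calc P ((fun ω i ↦ X i ω) ⁻¹' A)
      ≤ ∑' v : A, P (⋂ i, X i ⁻¹' {v.1 i}) :=
        (measure_mono hcover).trans (measure_biUnion_le P A.to_countable _)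
    _ = ∑' v : A, Measure.pi μ {v.1} := by
        refine tsum_congr fun v ↦ ?_
        rw [hX.meas_iInter fun i ↦ ⟨{v.1 i}, measurableSet_singleton _, rfl⟩,
          Measure.pi_singleton]
        simp_rw [hlaw]
    _ = Measure.pi μ A :=
        tsum_measure_preimage_singleton (f := id) A.to_countable
          fun _ _ ↦ measurableSet_singleton _

theorem iIndepFun.measure_biInter_pairs {Ω κ β : Type*} [MeasurableSpace Ω] [MeasurableSpace β]
    {μ : Measure Ω} {g : κ × Bool → Ω → β} (hg : iIndepFun g μ) (hmeas : ∀ t, Measurable (g t))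
    (s : κ → Set (β × β)) (hs : ∀ j, MeasurableSet (s j)) (F : Finset κ) :
    μ (⋂ j ∈ F, (fun ω ↦ (g (j, false) ω, g (j, true) ω)) ⁻¹' s j) =
      ∏ j ∈ F, μ ((fun ω ↦ (g (j, false) ω, g (j, true) ω)) ⁻¹' s j) := by
  classical
  have := hg.isProbabilityMeasure
  have hpair {S : Set (κ × Bool)} {j : κ} (hS : ∀ b, (j, b) ∈ S) :
      MeasurableSet[⨆ t ∈ S, MeasurableSpace.comap (g t) inferInstance]
        ((fun ω ↦ (g (j, false) ω, g (j, true) ω)) ⁻¹' s j) := by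
    have hm (b : Bool) :
        Measurable[⨆ t ∈ S, MeasurableSpace.comap (g t) inferInstance] (g (j, b)) :=
      Measurable.of_comap_le (le_iSup₂
        (f := fun t (_ : t ∈ S) ↦ MeasurableSpace.comap (g t) inferInstance) _ (hS b))
    exact ((hm false).prodMk (hm true)) (hs j)
  induction F using Finset.induction_on with
  | empty => simp
  | insert j F hj ih =>
    have hindep := indep_iSup_of_disjoint (fun t ↦ (hmeas t).comap_le) hg.iIndep
      (S := {t | t.1 = j}) (T := {t | t.1 ∈ F})
      (Set.disjoint_left.2 fun t ht ht' ↦ hj (by simp_all))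
    rw [set_biInter_insert, prod_insert hj, ← ih, (Indep_iff _ _ _).1 hindep]
    · exact hpair fun _ ↦ rfl
    · exact Finset.measurableSet_biInter _ fun j hj ↦ hpair fun _ ↦ hj

end ProbabilityTheory

namespace MeasureTheory

theorem Measure.pi_biInter_pairs {κ β : Type*} [Fintype κ] [MeasurableSpace β]
    (μ : κ × Bool → Measure β) [∀ t, IsProbabilityMeasure (μ t)]
    (s : κ → Set (β × β)) (hs : ∀ j, MeasurableSet (s j)) (F : Finset κ) :
    Measure.pi μ (⋂ j ∈ F, {v | (v (j, false), v (j, true)) ∈ s j}) =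
      ∏ j ∈ F, ((μ (j, false)).prod (μ (j, true))) (s j) := by
  have hind : iIndepFun (fun t (v : κ × Bool → β) ↦ v t) (Measure.pi μ) :=
    iIndepFun_pi (X := fun _ ↦ id) fun _ ↦ aemeasurable_id
  refine (hind.measure_biInter_pairs (fun t ↦ measurable_pi_apply t) s hs F).trans
    (prod_congr rfl fun j _ ↦ ?_)
  have hlaw (b : Bool) : HasLaw (fun v : κ × Bool → β ↦ v (j, b)) (μ (j, b)) (Measure.pi μ) :=
    (measurePreserving_eval μ (j, b)).hasLaw
  rw [← ((hind.indepFun (by simp)).hasLaw_prod (hlaw false) (hlaw true)).map_eq,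
    Measure.map_apply (by fun_prop) (hs j)]

end MeasureTheory

theorem rpow_neg_sub_rpow_neg_add_one_le {α x : ℝ} (hα : 1 ≤ α) (hx : 0 < x) :
    x ^ (-α) - (x + 1) ^ (-α) ≤ α * x ^ (-α) / x := by
  have hbern : 1 - α / (x + 1) ≤ (x / (x + 1)) ^ α := by
    have h := one_add_mul_self_le_rpow_one_add (s := -1 / (x + 1)) (by
      rw [neg_div, neg_le_neg_iff, div_le_one (by positivity)]; linarith) hα
    convert h using 2 <;> field_simp <;> ring
  rw [div_rpow hx.le (by positivity)] at hbern
  rw [rpow_neg hx.le, rpow_neg (by positivity)]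
  have hu : 0 < x ^ α := by positivity
  have hw : 0 < (x + 1) ^ α := by positivity
  calc (x ^ α)⁻¹ - ((x + 1) ^ α)⁻¹ = (x ^ α)⁻¹ * (1 - x ^ α / (x + 1) ^ α) := by
        field_simp
    _ ≤ (x ^ α)⁻¹ * (α / (x + 1)) := by gcongr; linarith
    _ ≤ (x ^ α)⁻¹ * (α / x) := by gcongr; linarith
    _ = α * (x ^ α)⁻¹ / x := by ring

theorem exists_rpow_neg_gap_le_mul_sqrt {α c : ℝ} (hα : 1 ≤ α) (hc : 0 < c) :
    ∃ κ ≥ 0, ∀ N > 0, ∀ x ≥ 1, c * N ^ (1 / (α + 2)) ≤ x →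
      N * x ^ (-α) - N * (x + 1) ^ (-α) ≤ κ * √(N * (x + 1) ^ (-α)) := by
  refine ⟨√(α ^ 2 * 2 ^ α / (c ^ α * c ^ 2)), sqrt_nonneg _, fun N hN x hx hcx ↦ ?_⟩
  have hx0 : 0 < x := by linarith
  have hgap := rpow_neg_sub_rpow_neg_add_one_le hα hx0
  rw [rpow_neg hx0.le, rpow_neg (by positivity)] at hgap ⊢
  set u := x ^ α
  set w := (x + 1) ^ α
  have hu : 0 < u := by positivity
  have hw : 0 < w := by positivity
  have hwu : w ≤ 2 ^ α * u := by
    rw [← mul_rpow zero_le_two hx0.le]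
    exact rpow_le_rpow (by positivity) (by linarith) (by linarith)
  have hNu : c ^ α * c ^ 2 * N ≤ u * x ^ 2 := by
    have h := rpow_le_rpow (by positivity) hcx (by linarith : 0 ≤ α + 2)
    rwa [mul_rpow hc.le (by positivity), ← rpow_mul hN.le, one_div_mul_cancel (by linarith),
      rpow_one, rpow_add hc, rpow_add hx0, rpow_two, rpow_two] at h
  have hdiff : N * u⁻¹ - N * w⁻¹ ≤ α * N / (u * x) := by
    calc N * u⁻¹ - N * w⁻¹ = N * (u⁻¹ - w⁻¹) := by ring
      _ ≤ N * (α * u⁻¹ / x) := by gcongr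
      _ = α * N / (u * x) := by field_simp
  have hdiff0 : 0 ≤ N * u⁻¹ - N * w⁻¹ := by
    have : u ≤ w := rpow_le_rpow hx0.le (by linarith) (by linarith)
    have := inv_anti₀ hu this
    nlinarith
  have hratio : N / (u * (u * x ^ 2)) ≤ 2 ^ α / (c ^ α * c ^ 2 * w) := by
    rw [div_le_div_iff₀ (by positivity) (by positivity)]
    calc N * (c ^ α * c ^ 2 * w) = (c ^ α * c ^ 2 * N) * w := by ring
      _ ≤ (u * x ^ 2) * (2 ^ α * u) := mul_le_mul hNu hwu hw.le (by positivity)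
      _ = 2 ^ α * (u * (u * x ^ 2)) := by ring
  rw [← sqrt_mul (by positivity)]
  refine le_sqrt_of_sq_le ?_
  calc (N * u⁻¹ - N * w⁻¹) ^ 2 ≤ (α * N / (u * x)) ^ 2 := pow_le_pow_left₀ hdiff0 hdiff 2
    _ = α ^ 2 * N * (N / (u * (u * x ^ 2))) := by field_simp
    _ ≤ α ^ 2 * N * (2 ^ α / (c ^ α * c ^ 2 * w)) := by gcongr
    _ = α ^ 2 * 2 ^ α / (c ^ α * c ^ 2) * (N * w⁻¹) := by field_simp

-- The paper's `λ i = N i ^ (-α)`, as the `ℝ≥0` rate taken by `poissonMeasure`.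
noncomputable def zipfRate (α N : ℝ) (i : ℕ) : ℝ≥0 := (N * (i : ℝ) ^ (-α)).toNNReal

theorem coe_zipfRate {α N : ℝ} (hN : 0 ≤ N) (i : ℕ) :
    (zipfRate α N i : ℝ) = N * (i : ℝ) ^ (-α) :=
  Real.coe_toNNReal _ (by positivity)

theorem zipfRate_succ_le {α N : ℝ} (hα : 0 ≤ α) (hN : 0 ≤ N) {i : ℕ} (hi : 1 ≤ i) :
    zipfRate α N (i + 1) ≤ zipfRate α N i := by
  refine Real.toNNReal_le_toNNReal (mul_le_mul_of_nonneg_left ?_ hN)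
  exact rpow_le_rpow_of_nonpos (by exact_mod_cast hi) (by push_cast; linarith) (by linarith)

theorem IsZipfPoisson.measure_preimage_singleton {Ω : Type*} [MeasurableSpace Ω] {P : Measure Ω}
    {X : ℕ → Ω → ℕ} {α N : ℝ} (h : IsZipfPoisson P X α N) (hN : 0 ≤ N) {i : ℕ} (hi : 1 ≤ i)
    (k : ℕ) : P (X i ⁻¹' {k}) = Po(zipfRate α N i) {k} := by
  rw [poissonMeasure_singleton, coe_zipfRate hN]
  exact h.2 i hi k

theorem measure_forall_succ_lt_le_pow {Ω : Type*} [MeasurableSpace Ω] {P : Measure Ω}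
    {X : ℕ → Ω → ℕ} (hX : iIndepFun (fun i : {i : ℕ // 1 ≤ i} ↦ X i) P) (rate : ℕ → ℝ≥0)
    (hlaw : ∀ i, 1 ≤ i → ∀ k, P (X i ⁻¹' {k}) = Po(rate i) {k}) {m : ℕ} {q : ℝ≥0∞}
    (hq : ∀ i, 1 ≤ i → m ≤ 2 * i → (Po(rate i).prod Po(rate (i + 1))) {p | p.2 < p.1} ≤ q) :
    P {ω | ∀ i, 1 ≤ i → i < m → X (i + 1) ω < X i ω} ≤ q ^ (m / 4) := by
  -- the `m / 4` disjoint pairs `(X i, X (i + 1))` with `i = h + 2 j`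
  obtain ⟨h, hh⟩ : ∃ h, h = m - 2 * (m / 4) := ⟨_, rfl⟩
  let e : Fin (m / 4) × Bool → {i : ℕ // 1 ≤ i} := fun t ↦
    ⟨bif t.2 then h + 2 * t.1 + 1 else h + 2 * t.1, by
      have := t.1.2; cases t.2 <;> simp only [cond_true, cond_false] <;> omega⟩
  have he : Function.Injective e := by
    rintro ⟨j, b⟩ ⟨j', b'⟩ hjb
    cases b <;> cases b' <;> simp [e, Fin.ext_iff] at hjb ⊢ <;> omega
  let A : Set (Fin (m / 4) × Bool → ℕ) :=
    ⋂ j ∈ univ, {v | (v (j, false), v (j, true)) ∈ {p | p.2 < p.1}}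
  calc P {ω | ∀ i, 1 ≤ i → i < m → X (i + 1) ω < X i ω}
      ≤ P ((fun ω t ↦ X (e t) ω) ⁻¹' A) := measure_mono fun ω hω ↦ by
        simp only [A, Set.mem_preimage, Set.mem_iInter]
        intro j _
        exact hω _ (by omega) (by omega)
    _ ≤ Measure.pi (fun t ↦ Po(rate (e t))) A :=
        (hX.precomp he).measure_preimage_le_pi _ (fun t ↦ hlaw _ (e t).2) A
    _ = ∏ j : Fin (m / 4), (Po(rate (h + 2 * j)).prod Po(rate (h + 2 * j + 1))) {p | p.2 < p.1} :=
        Measure.pi_biInter_pairs _ _ (fun _ ↦ .of_discrete) univ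
    _ ≤ ∏ _j : Fin (m / 4), q := prod_le_prod' fun j _ ↦ hq _ (by omega) (by omega)
    _ = q ^ (m / 4) := by simp

theorem zipf_poisson_order_tendsto_zero_general
    {Ω : Type*} [MeasurableSpace Ω] (P : ℝ → Measure Ω)
    (X : ℕ → Ω → ℕ) (α : ℝ) (hα : 1 < α)
    (hzp : ∀ N : ℝ, 0 < N → IsZipfPoisson (P N) X α N)
    (C : ℝ) (hC : 0 < C)
    (n : ℝ → ℕ)
    (hn : ∀ᶠ N : ℝ in atTop, C * N ^ ((1 : ℝ) / (α + 2)) ≤ (n N : ℝ)) :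
    Tendsto
      (fun N : ℝ => P N {ω | ∀ i : ℕ, 1 ≤ i → i < n N → X (i + 1) ω < X i ω})
      atTop (nhds 0) := by
  obtain ⟨κ, hκ, hgap⟩ := exists_rpow_neg_gap_le_mul_sqrt hα.le (half_pos hC)
  obtain ⟨δ, hδ, hpair⟩ := exists_le_poissonMeasure_prod_le hκ
  have hpair_lt {N : ℝ} (hN : 0 < N) {i : ℕ} (hi : 1 ≤ i)
      (hiN : C / 2 * N ^ ((1 : ℝ) / (α + 2)) ≤ i) :
      (Po(zipfRate α N i).prod Po(zipfRate α N (i + 1))) {p | p.2 < p.1} ≤ 1 - δ := by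
    rw [show {p : ℕ × ℕ | p.2 < p.1} = {p | p.1 ≤ p.2}ᶜ by ext; simp,
      prob_compl_eq_one_sub .of_discrete]
    refine tsub_le_tsub_left (hpair _ _ (zipfRate_succ_le (by linarith) hN.le hi) ?_) 1
    simpa [coe_zipfRate hN.le] using hgap N hN i (by exact_mod_cast hi) hiN
  have hn_top : Tendsto n atTop atTop := by
    refine tendsto_natCast_atTop_iff.1 (tendsto_atTop_mono' _ hn ?_)
    exact (tendsto_rpow_atTop (by positivity)).const_mul_atTop hC
  have hbound : ∀ᶠ N in atTop,
      P N {ω | ∀ i, 1 ≤ i → i < n N → X (i + 1) ω < X i ω} ≤ (1 - δ) ^ (n N / 4) := by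
    filter_upwards [hn, eventually_gt_atTop 0] with N hnN hN
    refine measure_forall_succ_lt_le_pow (hzp N hN).1 _
      (fun i hi ↦ (hzp N hN).measure_preimage_singleton hN.le hi) fun i hi hmi ↦ hpair_lt hN hi ?_
    have : (n N : ℝ) ≤ 2 * i := by exact_mod_cast hmi
    linarith
  have hq : 1 - δ < 1 := ENNReal.sub_lt_self ENNReal.one_ne_top one_ne_zero hδ.ne'
  exact tendsto_of_tendsto_of_tendsto_of_le_of_le' tendsto_const_nhds
    ((ENNReal.tendsto_pow_atTop_nhds_zero_of_lt_one hq).comp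
      ((Nat.tendsto_div_const_atTop four_ne_zero).comp hn_top))
    (.of_forall fun _ ↦ zero_le) hbound

/-- Limit to correct ordering: if `n(N) ≥ C N^(1/(α+2))` for some `C > 0` and all
large `N`, then `Pr(X₁ > X₂ > … > X_{n(N)}) → 0` as `N → ∞`. -/
theorem zipf_poisson_order_tendsto_zero
    {Ω : Type*} [MeasurableSpace Ω] (P : ℝ → Measure Ω)
    [∀ N, IsProbabilityMeasure (P N)]
    (X : ℕ → Ω → ℕ) (α : ℝ) (hα : 1 < α)
    (hzp : ∀ N : ℝ, 0 < N → IsZipfPoisson (P N) X α N)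
    (C : ℝ) (hC : 0 < C)
    (n : ℝ → ℕ) (hn1 : ∀ N, 1 ≤ n N)
    (hn : ∀ᶠ N : ℝ in atTop, C * N ^ ((1 : ℝ) / (α + 2)) ≤ (n N : ℝ)) :
    Tendsto
      (fun N : ℝ => P N {ω | ∀ i : ℕ, 1 ≤ i → i < n N → X (i + 1) ω < X i ω})
      atTop (nhds 0) :=
  zipf_poisson_order_tendsto_zero_general P X α hα hzp C hC n hn
end
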